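/- arXiv:2605.29633 — 9 statements merged into one kernel-verified Lean document; each statement's English description precedes it below -/
import Mathlib

section
/- For every natural number n ≥ 1 and every real number t with 0 ≤ t ≤ 1, |(1 − t)^n − e^{−n·t}| ≤ n·t²·e^{−n·t}. -/
/-- For every natural number `n ≥ 1` and every real `t` with `0 ≤ t ≤ 1`,
`|(1 - t)^n - e^{-n t}| ≤ n t² e^{-n t}`. -/
theorem abs_pow_sub_exp_le (n : ℕ) (hn : 1 ≤ n) (t : ℝ) (ht0 : 0 ≤ t) (ht1 : t ≤ 1) :
    |(1 - t) ^ n - Real.exp (-(n * t))| ≤ n * t ^ 2 * Real.exp (-(n * t)) := by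
  have h1 : (0:ℝ) ≤ 1 - t := by linarith
  have hexp : Real.exp (-t) ^ n = Real.exp (-(n * t)) := by
    rw [← Real.exp_nat_mul]; ring_nf
  have hle : 1 - t ≤ Real.exp (-t) := by
    have := Real.add_one_le_exp (-t); linarith
  have hE := Real.exp_pos (-t)
  have hEn := Real.exp_pos (-(n*t))
  -- upper bound
  have hup : (1 - t) ^ n ≤ Real.exp (-(n * t)) := by
    rw [← hexp]; exact pow_le_pow_left₀ h1 hle n
  -- key inequality for lower bound
  have hkey : (1 - t^2) * Real.exp (-t) ≤ 1 - t := by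
    have h2 : 1 + t ≤ Real.exp t := by have := Real.add_one_le_exp t; linarith
    have h3 : (1 + t) * Real.exp (-t) ≤ 1 := by
      have := mul_le_mul_of_nonneg_right h2 (le_of_lt hE)
      rw [← Real.exp_add] at this
      simpa using this
    nlinarith
  have hnn : (0:ℝ) ≤ (1 - t^2) * Real.exp (-t) := mul_nonneg (by nlinarith) hE.le
  have hpow : ((1 - t^2) * Real.exp (-t)) ^ n ≤ (1 - t) ^ n :=
    pow_le_pow_left₀ hnn hkey n
  have hbern : 1 + (n:ℝ) * (-t^2) ≤ (1 + (-t^2)) ^ n :=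
    one_add_mul_le_pow (by nlinarith) n
  have hdown : (1 - (n:ℝ) * t^2) * Real.exp (-(n * t)) ≤ (1 - t) ^ n := by
    have : (1 - (n:ℝ) * t^2) * Real.exp (-(n * t)) ≤ (1 - t^2)^n * Real.exp (-(n * t)) := by
      have : (1 - (n:ℝ) * t^2) ≤ (1 - t^2)^n := by
        have e : (1:ℝ) + -t^2 = 1 - t^2 := by ring
        rw [e] at hbern; linarith
      nlinarith
    calc (1 - (n:ℝ) * t^2) * Real.exp (-(n * t)) ≤ (1 - t^2)^n * Real.exp (-(n * t)) := this
      _ = ((1 - t^2) * Real.exp (-t)) ^ n := by rw [mul_pow, hexp]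
      _ ≤ (1 - t) ^ n := hpow
  rw [abs_le]
  constructor <;> nlinarith [hdown, hup, mul_nonneg (mul_nonneg (Nat.cast_nonneg (α := ℝ) n) (sq_nonneg t)) hEn.le]
end

section
/- For all integers n ≥ 1 and k ≥ 1, |S(n,k) − (1 − e^{−n/k})^k| ≤ (n/k)·(1 + e^{−n/k})^{k−2}·e^{−n/k}·(k·e^{−n/k} + 1), where (1 + e^{−n/k})^{k−2} denotes a real power when k < 2. -/
/-!
Expanding `(1 - e^{-n/k})^k` binomially, `S(n,k) - (1 - e^{-n/k})^k` becomes
`Σⱼ C(k,j) (-1)ʲ ((1 - j/k)ⁿ - e^{-jn/k})`. For `t ∈ [-1, 1]`,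
`0 ≤ e^{-tn} - (1 - t)ⁿ ≤ n t² e^{-tn}`, the second inequality coming from Bernoulli's
inequality `(1 - t²)ⁿ ≥ 1 - n t²` and `(1 + t) e^{-t} ≤ 1`. Hence the error is at most
`(n/k²) Σⱼ C(k,j) j² xʲ` with `x = e^{-n/k}`, and this second binomial moment is
`k x (k x + 1) (1 + x)^{k-2}`.
-/

open Finset

/-- `S(n,k) = Stirling(n,k)·k!/kⁿ`, written via the sieve formula. -/
noncomputable def Snk (n k : ℕ) : ℝ :=
  ∑ j ∈ Finset.range (k + 1), (k.choose j : ℝ) * (-1) ^ j * (1 - (j : ℝ) / k) ^ n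

section BinomialMoments

variable {R : Type*} [CommSemiring R]

lemma sum_range_choose_mul_pow (m : ℕ) (x : R) :
    ∑ i ∈ range (m + 1), (m.choose i : R) * x ^ i = (1 + x) ^ m := by
  rw [add_comm 1 x, add_pow]
  exact sum_congr rfl fun i _ => by ring

lemma sum_range_choose_succ_mul_natCast_mul (m : ℕ) (f : ℕ → R) :
    ∑ i ∈ range (m + 2), ((m + 1).choose i : R) * i * f i =
      (m + 1) * ∑ i ∈ range (m + 1), (m.choose i : R) * f (i + 1) := by
  rw [sum_range_succ', mul_sum]
  simp only [Nat.cast_zero, mul_zero, zero_mul, add_zero, ← mul_assoc]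
  refine sum_congr rfl fun i _ => ?_
  have h := congrArg (Nat.cast (R := R)) (Nat.add_one_mul_choose_eq m i)
  push_cast at h ⊢
  rw [h]

lemma one_add_mul_sum_range_choose_mul_natCast_mul_pow (m : ℕ) (x : R) :
    (1 + x) * ∑ i ∈ range (m + 1), (m.choose i : R) * i * x ^ i = m * x * (1 + x) ^ m := by
  cases m with
  | zero => simp
  | succ m =>
    rw [sum_range_choose_succ_mul_natCast_mul]
    simp only [pow_succ, ← mul_assoc, ← sum_mul, sum_range_choose_mul_pow]
    push_cast
    ring

lemma one_add_sq_mul_sum_range_choose_mul_natCast_sq_mul_pow (m : ℕ) (x : R) :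
    (1 + x) ^ 2 * ∑ i ∈ range (m + 1), (m.choose i : R) * i ^ 2 * x ^ i =
      m * x * (m * x + 1) * (1 + x) ^ m := by
  cases m with
  | zero => simp
  | succ m =>
    have hsq : ∑ i ∈ range (m + 2), ((m + 1).choose i : R) * i ^ 2 * x ^ i =
        ∑ i ∈ range (m + 2), ((m + 1).choose i : R) * i * (i * x ^ i) :=
      sum_congr rfl fun i _ => by ring
    have hshift : ∑ i ∈ range (m + 1), (m.choose i : R) * (((i + 1 : ℕ) : R) * x ^ (i + 1)) =
        x * (∑ i ∈ range (m + 1), (m.choose i : R) * i * x ^ i +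
          ∑ i ∈ range (m + 1), (m.choose i : R) * x ^ i) := by
      rw [← sum_add_distrib, mul_sum]
      exact sum_congr rfl fun i _ => by push_cast; ring
    rw [hsq, sum_range_choose_succ_mul_natCast_mul, hshift,
      sum_range_choose_mul_pow]
    calc (1 + x) ^ 2 * ((m + 1) * (x * (∑ i ∈ range (m + 1), (m.choose i : R) * i * x ^ i +
          (1 + x) ^ m)))
        = (m + 1) * x * (1 + x) * ((1 + x) * ∑ i ∈ range (m + 1), (m.choose i : R) * i * x ^ i +
          (1 + x) ^ (m + 1)) := by ring
      _ = _ := by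
        rw [one_add_mul_sum_range_choose_mul_natCast_mul_pow]
        push_cast
        ring

end BinomialMoments

open Real

lemma sum_range_choose_mul_natCast_sq_mul_pow_eq_rpow {x : ℝ} (hx : 0 < 1 + x) (k : ℕ) :
    ∑ i ∈ range (k + 1), (k.choose i : ℝ) * i ^ 2 * x ^ i =
      k * x * (k * x + 1) * (1 + x) ^ ((k : ℝ) - 2) := by
  rw [rpow_sub hx, rpow_two, rpow_natCast, mul_div_assoc', eq_div_iff (by positivity), mul_comm,
    one_add_sq_mul_sum_range_choose_mul_natCast_sq_mul_pow]

lemma abs_one_sub_pow_sub_exp_neg_pow_le (n : ℕ) {t : ℝ} (ht₀ : -1 ≤ t) (ht₁ : t ≤ 1) :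
    |(1 - t) ^ n - exp (-t) ^ n| ≤ n * t ^ 2 * exp (-t) ^ n := by
  have hupper : (1 - t) ^ n ≤ exp (-t) ^ n :=
    pow_le_pow_left₀ (by linarith) (one_sub_le_exp_neg t) n
  have hbernoulli : 1 - n * t ^ 2 ≤ (1 - t ^ 2) ^ n := by
    simpa [← sub_eq_add_neg] using one_add_mul_le_pow (a := -t ^ 2) (by nlinarith) n
  have hstep : (1 - t ^ 2) * exp (-t) ≤ 1 - t := by
    have h : (1 + t) * exp (-t) ≤ 1 := by
      calc (1 + t) * exp (-t) ≤ exp t * exp (-t) := by gcongr; linarith [add_one_le_exp t]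
        _ = 1 := by rw [← exp_add, add_neg_cancel, exp_zero]
    calc (1 - t ^ 2) * exp (-t) = (1 - t) * ((1 + t) * exp (-t)) := by ring
      _ ≤ 1 - t := mul_le_of_le_one_right (by linarith) h
  have hlower : (1 - n * t ^ 2) * exp (-t) ^ n ≤ (1 - t) ^ n :=
    calc (1 - n * t ^ 2) * exp (-t) ^ n ≤ (1 - t ^ 2) ^ n * exp (-t) ^ n := by gcongr
      _ = ((1 - t ^ 2) * exp (-t)) ^ n := (mul_pow _ _ _).symm
      _ ≤ (1 - t) ^ n := pow_le_pow_left₀ (mul_nonneg (by nlinarith) (exp_pos _).le) hstep n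
  rw [abs_sub_comm, abs_of_nonneg (sub_nonneg.2 hupper)]
  linarith

lemma abs_Snk_sub_one_sub_exp_pow_le (n k : ℕ) :
    |Snk n k - (1 - exp (-(n : ℝ) / k)) ^ k| ≤
      ∑ j ∈ range (k + 1), (k.choose j : ℝ) * (n * ((j : ℝ) / k) ^ 2 * exp (-(n : ℝ) / k) ^ j) := by
  have hpow (j : ℕ) : exp (-(n : ℝ) / k) ^ j = exp (-((j : ℝ) / k)) ^ n := by
    rw [← exp_nat_mul, ← exp_nat_mul]
    ring_nf
  have hbinom : (1 - exp (-(n : ℝ) / k)) ^ k =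
      ∑ j ∈ range (k + 1), (k.choose j : ℝ) * (-1) ^ j * exp (-(n : ℝ) / k) ^ j := by
    rw [sub_eq_add_neg, ← sum_range_choose_mul_pow]
    exact sum_congr rfl fun j _ => by rw [neg_pow]; ring
  rw [Snk, hbinom, ← sum_sub_distrib]
  refine (abs_sum_le_sum_abs _ _).trans (sum_le_sum fun j hj => ?_)
  have hjk : (j : ℝ) ≤ k := by exact_mod_cast mem_range_succ_iff.mp hj
  rw [← mul_sub, abs_mul, abs_mul, abs_pow, abs_neg, abs_one, one_pow, mul_one, Nat.abs_cast,
    hpow]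
  have ht₀ : (0 : ℝ) ≤ j / k := by positivity
  exact mul_le_mul_of_nonneg_left (abs_one_sub_pow_sub_exp_neg_pow_le n (by linarith)
    (div_le_one_of_le₀ hjk k.cast_nonneg)) (Nat.cast_nonneg _)

theorem Snk_sub_pow_abs_le_general (n k : ℕ) :
    |Snk n k - (1 - Real.exp (-(n : ℝ) / k)) ^ k| ≤
      ((n : ℝ) / k) * (1 + Real.exp (-(n : ℝ) / k)) ^ ((k : ℝ) - 2) *
        Real.exp (-(n : ℝ) / k) * ((k : ℝ) * Real.exp (-(n : ℝ) / k) + 1) := by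
  set x := exp (-(n : ℝ) / k)
  have hn_div : (n : ℝ) / k ^ 2 * k = n / k := by
    rw [div_mul_eq_mul_div, sq, mul_div_assoc, div_self_mul_self', div_eq_mul_inv]
  calc |Snk n k - (1 - x) ^ k|
      ≤ ∑ j ∈ range (k + 1), (k.choose j : ℝ) * (n * ((j : ℝ) / k) ^ 2 * x ^ j) :=
        abs_Snk_sub_one_sub_exp_pow_le n k
    _ = n / k ^ 2 * ∑ j ∈ range (k + 1), (k.choose j : ℝ) * j ^ 2 * x ^ j := by
        rw [mul_sum]
        exact sum_congr rfl fun j _ => by ring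
    _ = n / k ^ 2 * k * (1 + x) ^ ((k : ℝ) - 2) * x * (k * x + 1) := by
        rw [sum_range_choose_mul_natCast_sq_mul_pow_eq_rpow (by positivity)]
        ring
    _ = _ := by rw [hn_div]

/-- For all integers `n ≥ 1`, `k ≥ 1`,
`|S(n,k) − (1 − e^{−n/k})^k| ≤ (n/k)·(1 + e^{−n/k})^{k−2}·e^{−n/k}·(k·e^{−n/k} + 1)`,
where the power `k - 2` is a real power. -/
theorem Snk_sub_pow_abs_le (n k : ℕ) (hn : 1 ≤ n) (hk : 1 ≤ k) :
    |Snk n k - (1 - Real.exp (-(n : ℝ) / k)) ^ k| ≤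
      ((n : ℝ) / k) * (1 + Real.exp (-(n : ℝ) / k)) ^ ((k : ℝ) - 2) *
        Real.exp (-(n : ℝ) / k) * ((k : ℝ) * Real.exp (-(n : ℝ) / k) + 1) :=
  Snk_sub_pow_abs_le_general n k
end

section
/- For all integers k and n with 2 ≤ k ≤ n, S(n,k) < (1 − (1 − 1/k)^n)^k. -/
/-!
Let `f : Fin n → Fin k` be uniformly random, so that `Snk n k` is the probability that `f` is
onto and `hitProb k n = 1 - (1 - 1/k)^n` the probability that it takes a given value. These events
are negatively correlated: for `a ∉ S`, P(`f` hits `S` and `a`) ≤ `hitProb k n` · P(`f` hits `S`).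
Since `f` conditioned on missing `a` is uniform into the smaller codomain, this says that a smaller
codomain makes hitting `S` more likely. For `U = insert a T`, exchanging the values of a pair of
maps at every point where one of them equals `a` injects (`U`-valued maps hitting `S`) ×
(`T`-valued maps) into (`T`-valued maps hitting `S`) × (`U`-valued maps), missing `(f₀, const a)`
for every `f₀` in the target; at the last step `k - 1 ≤ n` provides such an `f₀`, whence strictness.
-/

open Finset

open fwdDiff

variable {α β : Type*} [DecidableEq β]

def swapAt (a : β) (p : (α → β) × (α → β)) : (α → β) × (α → β) :=
  (fun x => if p.1 x = a ∨ p.2 x = a then p.2 x else p.1 x,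
   fun x => if p.1 x = a ∨ p.2 x = a then p.1 x else p.2 x)

lemma swapAt_involutive (a : β) : Function.Involutive (swapAt (α := α) a) := by
  intro p
  ext x <;> by_cases h : p.1 x = a ∨ p.2 x = a <;> simp [swapAt, h, or_comm]

variable [Fintype α] [DecidableEq α]

variable (α) in
def hitting (T S : Finset β) : Finset (α → β) :=
  {f ∈ Fintype.piFinset fun _ => T | ∀ b ∈ S, ∃ x, f x = b}

lemma mem_hitting {T S : Finset β} {f : α → β} :
    f ∈ hitting α T S ↔ (∀ x, f x ∈ T) ∧ ∀ b ∈ S, ∃ x, f x = b := by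
  simp [hitting]

lemma card_hitting_empty (T : Finset β) : #(hitting α T ∅) = #T ^ Fintype.card α := by
  simp [hitting]

lemma card_hitting_insert_add_card_hitting_erase (T S : Finset β) (a : β) :
    #(hitting α T (insert a S)) + #(hitting α (T.erase a) S) = #(hitting α T S) := by
  have h₁ : hitting α T (insert a S) = {f ∈ hitting α T S | ∃ x, f x = a} := by
    ext f; simp only [mem_filter, mem_hitting, forall_mem_insert]; tauto
  have h₂ : hitting α (T.erase a) S = {f ∈ hitting α T S | ¬∃ x, f x = a} := by
    ext f; simp only [mem_filter, mem_hitting, mem_erase, not_exists]; grind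
  rw [h₁, h₂, card_filter_add_card_filter_not]

lemma card_hitting_insert_eq_sub (T S : Finset β) (a : β) :
    (#(hitting α T (insert a S)) : ℝ) = #(hitting α T S) - #(hitting α (T.erase a) S) := by
  rw [← card_hitting_insert_add_card_hitting_erase T S a]; push_cast; ring

lemma cast_card_erase_of_mem {T : Finset β} {a : β} (ha : a ∈ T) :
    ((#(T.erase a) : ℕ) : ℝ) = #T - 1 := by
  rw [← card_erase_add_one ha]; push_cast; ring

lemma card_hitting_eq_fwdDiff {T S : Finset β} (h : S ⊆ T) :
    (#(hitting α T S) : ℝ) = Δ_[1] ^[#S] (fun x : ℝ => x ^ Fintype.card α) (#T - #S) := by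
  induction S using Finset.induction_on generalizing T with
  | empty => simp [card_hitting_empty]
  | insert a S haS ih =>
    have haT : a ∈ T := h (mem_insert_self a S)
    have hST : S ⊆ T.erase a := fun b hb =>
      mem_erase.2 ⟨ne_of_mem_of_not_mem hb haS, h (mem_insert_of_mem hb)⟩
    rw [card_insert_of_notMem haS, Function.iterate_succ_apply', fwdDiff,
      card_hitting_insert_eq_sub, ih ((subset_insert a S).trans h), ih hST,
      cast_card_erase_of_mem haT, Nat.cast_succ, sub_add_eq_sub_sub, sub_add_cancel,
      sub_right_comm]

lemma Snk_eq_fwdDiff (n : ℕ) {k : ℕ} (hk : k ≠ 0) :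
    Snk n k = Δ_[1] ^[k] (fun x : ℝ => x ^ n) 0 / k ^ n := by
  rw [fwdDiff_iter_eq_sum_shift, Snk, sum_div, ← sum_range_reflect]
  refine sum_congr rfl fun j hj => ?_
  have hjk : j ≤ k := Nat.lt_succ_iff.1 (mem_range.1 hj)
  have hk' : (k : ℝ) ≠ 0 := Nat.cast_ne_zero.2 hk
  rw [Nat.add_sub_cancel, Nat.choose_symm hjk, Nat.cast_sub hjk, zsmul_eq_mul, nsmul_eq_mul,
    show 1 - ((k : ℝ) - j) / k = j / k by field_simp; ring]
  push_cast
  ring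

lemma Snk_eq_card_hitting (n : ℕ) {k : ℕ} (hk : k ≠ 0) :
    Snk n k = #(hitting (Fin n) (range k) (range k)) / k ^ n := by
  rw [Snk_eq_fwdDiff n hk, card_hitting_eq_fwdDiff subset_rfl, sub_self, card_range,
    Fintype.card_fin]

lemma hitting_nonempty {T S : Finset β} (hST : S ⊆ T) (hS : S.Nonempty)
    (hcard : #S ≤ Fintype.card α) : (hitting α T S).Nonempty := by
  obtain ⟨e⟩ := Function.Embedding.nonempty_of_card_le (α := S) (β := α) (by simpa using hcard)
  have : Nonempty S := hS.to_subtype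
  refine ⟨fun x => ((Function.invFun (e : S → α) x : S) : β),
    mem_hitting.2 ⟨fun x => hST (Function.invFun (e : S → α) x).2, fun b hb => ⟨e ⟨b, hb⟩, ?_⟩⟩⟩
  simp [Function.leftInverse_invFun e.injective _]

lemma swapAt_mem_hitting_product {a : β} {T S : Finset β} (haT : a ∉ T) (haS : a ∉ S)
    {p : (α → β) × (α → β)}
    (hp : p ∈ hitting α (insert a T) S ×ˢ Fintype.piFinset fun _ => T) :
    swapAt a p ∈ hitting α T S ×ˢ Fintype.piFinset fun _ => insert a T := by
  obtain ⟨⟨hf, hfS⟩, hg⟩ :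
      ((∀ x, p.1 x ∈ insert a T) ∧ ∀ b ∈ S, ∃ x, p.1 x = b) ∧ ∀ x, p.2 x ∈ T := by
    simpa [mem_hitting] using hp
  have hga : ∀ x, p.2 x ≠ a := fun x h => haT (h ▸ hg x)
  refine mem_product.2
    ⟨mem_hitting.2 ⟨fun x => ?_, fun b hb => ?_⟩, Fintype.mem_piFinset.2 fun x => ?_⟩
  · by_cases h : p.1 x = a
    · simpa [swapAt, h] using hg x
    · simpa [swapAt, h, hga x] using hf x
  · obtain ⟨x, hx⟩ := hfS b hb
    have hba : b ≠ a := ne_of_mem_of_not_mem hb haS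
    exact ⟨x, by simp [swapAt, hga x, hx, hba]⟩
  · by_cases h : p.1 x = a
    · simp [swapAt, h]
    · simp [swapAt, h, hga x, hg x]

lemma card_mul_card_hitting_insert_le {a : β} {T S : Finset β} (haT : a ∉ T) (haS : a ∉ S) :
    #T ^ Fintype.card α * #(hitting α (insert a T) S) ≤
      #(insert a T) ^ Fintype.card α * #(hitting α T S) := by
  have := card_le_card_of_injOn (swapAt (α := α) a)
    (fun p hp => swapAt_mem_hitting_product haT haS hp) (swapAt_involutive a).injective.injOn
  simpa [card_product, mul_comm] using this

lemma card_mul_card_hitting_insert_lt {a : β} {T S : Finset β} (haT : a ∉ T) (haS : a ∉ S)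
    (hS : S.Nonempty) (hT : (hitting α T S).Nonempty) :
    #T ^ Fintype.card α * #(hitting α (insert a T) S) <
      #(insert a T) ^ Fintype.card α * #(hitting α T S) := by
  obtain ⟨f, hf⟩ := hT
  set Q := hitting α T S ×ˢ Fintype.piFinset fun _ : α => insert a T
  have hw : (f, fun _ => a) ∈ Q :=
    mem_product.2 ⟨hf, Fintype.mem_piFinset.2 fun _ => mem_insert_self a T⟩
  have hmaps : ∀ p ∈ hitting α (insert a T) S ×ˢ Fintype.piFinset fun _ => T,
      swapAt a p ∈ Q.erase (f, fun _ => a) := by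
    intro p hp
    refine mem_erase.2 ⟨fun h => ?_, swapAt_mem_hitting_product haT haS hp⟩
    have hp1 : p.1 = fun _ => a := by
      rw [← swapAt_involutive a p, h]; ext x; simp [swapAt]
    obtain ⟨b, hb⟩ := hS
    obtain ⟨x, hx⟩ := (mem_hitting.1 (mem_product.1 hp).1).2 b hb
    rw [hp1] at hx
    exact ne_of_mem_of_not_mem hb haS hx.symm
  have hle := card_le_card_of_injOn _ hmaps (swapAt_involutive a).injective.injOn
  rw [card_erase_of_mem hw] at hle
  have hlt : #(hitting α (insert a T) S ×ˢ Fintype.piFinset fun _ : α => T) < #Q := by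
    have := card_pos.2 ⟨_, hw⟩; omega
  simpa [Q, card_product, mul_comm] using hlt

noncomputable def hitProb (u N : ℕ) : ℝ := 1 - (1 - 1 / u) ^ N

lemma hitProb_nonneg (u N : ℕ) : 0 ≤ hitProb u N := by
  rw [hitProb, sub_nonneg]
  rcases u.eq_zero_or_pos with rfl | hu
  · simp
  · have : (0 : ℝ) ≤ 1 - 1 / u :=
      sub_nonneg.2 (div_le_one_of_le₀ (by exact_mod_cast hu) (by positivity))
    exact pow_le_one₀ this (sub_le_self _ (by positivity))

lemma card_hitting_insert_le {U S : Finset β} {a : β} (ha : a ∈ U) (haS : a ∉ S) :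
    (#(hitting α U (insert a S)) : ℝ) ≤ hitProb #U (Fintype.card α) * #(hitting α U S) := by
  have key := card_mul_card_hitting_insert_le (α := α) (notMem_erase a U) haS
  rw [insert_erase ha] at key
  have hU : (0 : ℝ) < #U := by exact_mod_cast card_pos.2 ⟨a, ha⟩
  have : (1 - 1 / #U : ℝ) ^ Fintype.card α * #(hitting α U S) ≤ #(hitting α (U.erase a) S) := by
    rw [one_sub_div hU.ne', div_pow, div_mul_eq_mul_div, div_le_iff₀ (by positivity),
      ← cast_card_erase_of_mem ha, mul_comm (_ : ℝ) (#U ^ Fintype.card α)]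
    exact_mod_cast key
  rw [card_hitting_insert_eq_sub, hitProb]
  linarith

lemma card_hitting_insert_lt {U S : Finset β} {a : β} (ha : a ∈ U) (haS : a ∉ S)
    (hS : S.Nonempty) (hne : (hitting α (U.erase a) S).Nonempty) :
    (#(hitting α U (insert a S)) : ℝ) < hitProb #U (Fintype.card α) * #(hitting α U S) := by
  have key := card_mul_card_hitting_insert_lt (notMem_erase a U) haS hS hne
  rw [insert_erase ha] at key
  have hU : (0 : ℝ) < #U := by exact_mod_cast card_pos.2 ⟨a, ha⟩
  have : (1 - 1 / #U : ℝ) ^ Fintype.card α * #(hitting α U S) < #(hitting α (U.erase a) S) := by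
    rw [one_sub_div hU.ne', div_pow, div_mul_eq_mul_div, div_lt_iff₀ (by positivity),
      ← cast_card_erase_of_mem ha, mul_comm (_ : ℝ) (#U ^ Fintype.card α)]
    exact_mod_cast key
  rw [card_hitting_insert_eq_sub, hitProb]
  linarith

lemma card_hitting_le {U S : Finset β} (h : S ⊆ U) :
    (#(hitting α U S) : ℝ) ≤ #U ^ Fintype.card α * hitProb #U (Fintype.card α) ^ #S := by
  induction S using Finset.induction_on with
  | empty => simp [card_hitting_empty]
  | insert a S haS ih =>
    calc (#(hitting α U (insert a S)) : ℝ)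
        ≤ hitProb #U (Fintype.card α) * #(hitting α U S) :=
          card_hitting_insert_le (h (mem_insert_self a S)) haS
      _ ≤ hitProb #U (Fintype.card α) *
            (#U ^ Fintype.card α * hitProb #U (Fintype.card α) ^ #S) :=
          mul_le_mul_of_nonneg_left (ih ((subset_insert a S).trans h)) (hitProb_nonneg _ _)
      _ = #U ^ Fintype.card α * hitProb #U (Fintype.card α) ^ #(insert a S) := by
        rw [card_insert_of_notMem haS]; ring

/-- Bernstein's inequality: for `2 ≤ k ≤ n`, `S(n,k) < (1 − (1 − 1/k)ⁿ)^k`. -/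
theorem Snk_lt_pow (n k : ℕ) (hk : 2 ≤ k) (hkn : k ≤ n) :
    Snk n k < (1 - (1 - 1 / (k : ℝ)) ^ n) ^ k := by
  obtain ⟨m, rfl⟩ : ∃ m, k = m + 1 := ⟨k - 1, by omega⟩
  have hm : (range m).Nonempty := nonempty_range_iff.2 (by omega)
  have hne : (hitting (Fin n) ((range (m + 1)).erase m) (range m)).Nonempty := by
    rw [range_add_one, erase_insert notMem_range_self]
    exact hitting_nonempty subset_rfl hm (by simp; omega)
  have hlast := card_hitting_insert_lt (self_mem_range_succ m) notMem_range_self hm hne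
  have hrest := card_hitting_le (α := Fin n) (range_subset_range.2 m.le_succ)
  rw [← range_add_one] at hlast
  simp only [card_range, Fintype.card_fin] at hlast hrest
  rw [Snk_eq_card_hitting n (by omega), div_lt_iff₀ (by positivity)]
  calc _ < hitProb (m + 1) n * #(hitting (Fin n) (range (m + 1)) (range m)) := hlast
    _ ≤ hitProb (m + 1) n * ((m + 1 : ℕ) ^ n * hitProb (m + 1) n ^ m) :=
      mul_le_mul_of_nonneg_left hrest (hitProb_nonneg _ _)
    _ = _ := by rw [hitProb]; push_cast; ring
end

section
/- Let n and k be integers with 2 ≤ k ≤ n, let λ := k·e^{−n/k}, and suppose λ ≥ 1; set j₀ := ⌊λ⌋. Then (λ^{j₀}/j₀!)·exp(−2n·e^{−2n/k}/(1 − 1/e − 1/2)) ≤ max_{0 ≤ j ≤ k} b_{n,k}(j) ≤ λ^{j₀}/j₀!. -/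
open Finset

/-- `b_{n,k}(j) = C(k,j)·(1 − j/k)ⁿ`. -/
noncomputable def bnk (n k j : ℕ) : ℝ :=
  (k.choose j : ℝ) * (1 - (j : ℝ) / k) ^ n

/-!
Since `C(k,j) ≤ k^j/j!` and `1 - j/k ≤ e^{-j/k}`, every `b_{n,k}(j)` is at most the Poisson
weight `λ^j/j!`, which is maximal at `j = ⌊λ⌋`. Conversely `C(k,j) ≥ (k-j)^j/j!` and
`1 - t ≥ e^{-t/(1-t)}` give `b_{n,k}(j) ≥ (k^j/j!) e^{-(j+n)t/(1-t)}` with `t = j/k`; for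
`j ≤ λ` we have `t ≤ e^{-n/k} ≤ 1/e`, and the excess of the exponent over `nt` (which produces
`λ^j`) is at most `2n e^{-2n/k}/(1 - t)`.
-/

open Real Nat

theorem pow_succ_div_factorial_succ (a : ℝ) (j : ℕ) :
    a ^ (j + 1) / (j + 1)! = a ^ j / j ! * (a / (j + 1)) := by
  rw [factorial_succ]; push_cast; field_simp; ring

theorem pow_div_factorial_le_floor {a : ℝ} (ha : 0 ≤ a) (j : ℕ) :
    a ^ j / j ! ≤ a ^ ⌊a⌋₊ / ⌊a⌋₊ ! := by
  set f : ℕ → ℝ := fun i ↦ a ^ i / (i)!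
  have hf : ∀ i, f (i + 1) = f i * (a / (i + 1)) := pow_succ_div_factorial_succ a
  have hf0 : ∀ i, 0 ≤ f i := fun i ↦ by positivity
  have hup : ∀ i, i + 1 ≤ ⌊a⌋₊ → f i ≤ f (i + 1) := fun i hi ↦ by
    rw [hf]
    refine le_mul_of_one_le_right (hf0 i) ((one_le_div (by positivity)).2 ?_)
    exact_mod_cast (Nat.le_floor_iff ha).1 hi
  have hdown : ∀ i ≥ ⌊a⌋₊, f (i + 1) ≤ f i := fun i hi ↦ by
    rw [hf]
    refine mul_le_of_le_one_right (hf0 i) (div_le_one_of_le₀ ?_ (by positivity))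
    have : (⌊a⌋₊ : ℝ) ≤ i := by exact_mod_cast hi
    linarith [Nat.lt_floor_add_one a]
  rcases le_total j ⌊a⌋₊ with hj | hj
  · induction hj using Nat.decreasingInduction with
    | self => rfl
    | of_succ i hi ih => exact (hup i hi).trans ih
  · exact antitoneOn_nat_Ici_of_succ_le hdown (le_refl ⌊a⌋₊) hj hj

theorem exp_neg_mul_div_one_sub_le_one_sub_pow (n : ℕ) {t : ℝ} (ht : t < 1) :
    exp (-(n * (t / (1 - t)))) ≤ (1 - t) ^ n := by
  have h1t : 0 < 1 - t := by linarith
  have hbase : exp (-(t / (1 - t))) ≤ 1 - t := by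
    rw [exp_neg, inv_le_comm₀ (exp_pos _) h1t]
    calc (1 - t)⁻¹ = t / (1 - t) + 1 := by field_simp; ring
      _ ≤ exp (t / (1 - t)) := add_one_le_exp _
  rw [← mul_neg, exp_nat_mul]
  exact pow_le_pow_left₀ (exp_nonneg _) hbase n

theorem bnk_le_pow_div_factorial (n : ℕ) {k j : ℕ} (hj : j ≤ k) :
    bnk n k j ≤ ((k : ℝ) * exp (-(n : ℝ) / k)) ^ j / j ! := by
  have hchoose : (k.choose j : ℝ) ≤ (k : ℝ) ^ j / j ! := by
    exact_mod_cast choose_le_pow_div (α := ℝ) j k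
  have hjk : (j : ℝ) / k ≤ 1 := div_le_one_of_le₀ (by exact_mod_cast hj) (by positivity)
  have hpow : (1 - (j : ℝ) / k) ^ n ≤ exp (-(n : ℝ) / k) ^ j :=
    calc (1 - (j : ℝ) / k) ^ n ≤ exp (-((j : ℝ) / k)) ^ n :=
          pow_le_pow_left₀ (by linarith) (one_sub_le_exp_neg _) n
      _ = exp (-(n : ℝ) / k) ^ j := by rw [← exp_nat_mul, ← exp_nat_mul]; ring_nf
  calc bnk n k j ≤ (k : ℝ) ^ j / j ! * exp (-(n : ℝ) / k) ^ j :=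
        mul_le_mul hchoose hpow (by positivity) (by positivity)
    _ = ((k : ℝ) * exp (-(n : ℝ) / k)) ^ j / j ! := by ring

theorem pow_div_factorial_mul_one_sub_pow_le_bnk (n : ℕ) {k j : ℕ} (hk : 0 < k) (hj : j ≤ k) :
    (k : ℝ) ^ j / j ! * (1 - (j : ℝ) / k) ^ (j + n) ≤ bnk n k j := by
  have hk' : (k : ℝ) ≠ 0 := by positivity
  have hkj : (k : ℝ) * (1 - (j : ℝ) / k) = (k - j : ℕ) := by
    push_cast [hj]; field_simp
  have hchoose : ((k - j : ℕ) : ℝ) ^ j / j ! ≤ k.choose j :=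
    (div_le_div_of_nonneg_right (pow_le_pow_left₀ (by positivity)
      (by exact_mod_cast Nat.sub_le_sub_right k.le_succ j) j) (by positivity)).trans
      (pow_le_choose j k)
  calc (k : ℝ) ^ j / j ! * (1 - (j : ℝ) / k) ^ (j + n)
      = ((k - j : ℕ) : ℝ) ^ j / j ! * (1 - (j : ℝ) / k) ^ n := by
        rw [← hkj, pow_add, mul_pow]; ring
    _ ≤ bnk n k j := by
        have : (0 : ℝ) ≤ 1 - (j : ℝ) / k :=
          sub_nonneg.2 (div_le_one_of_le₀ (by exact_mod_cast hj) (by positivity))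
        exact mul_le_mul_of_nonneg_right hchoose (pow_nonneg this n)

theorem add_mul_div_one_sub_le {j n t x δ : ℝ} (hn : 0 ≤ n) (ht : 0 ≤ t) (htx : t ≤ x)
    (hjt : j * t ≤ n * x ^ 2) (hδ : 0 < δ) (hδx : δ ≤ 1 - x) :
    (j + n) * (t / (1 - t)) ≤ n * t + 2 * n * x ^ 2 / δ := by
  have h1t : 0 < 1 - t := by linarith
  have hnt : n * t ^ 2 ≤ n * x ^ 2 := by gcongr
  have hsplit : (j + n) * (t / (1 - t)) = n * t + (j * t + n * t ^ 2) / (1 - t) := by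
    field_simp; ring
  rw [hsplit, add_le_add_iff_left]
  exact div_le_div₀ (by positivity) (by linarith) hδ (by linarith)

theorem pow_div_factorial_mul_exp_le_bnk {n k j : ℕ} (hk : 0 < k) (hkn : k ≤ n)
    (hj : (j : ℝ) ≤ k * exp (-(n : ℝ) / k)) {δ : ℝ} (hδ : 0 < δ)
    (hδx : δ ≤ 1 - exp (-(n : ℝ) / k)) :
    ((k : ℝ) * exp (-(n : ℝ) / k)) ^ j / j ! *
        exp (-(2 * (n : ℝ) * exp (-(2 * (n : ℝ)) / k)) / δ) ≤ bnk n k j := by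
  set x := exp (-(n : ℝ) / k) with hx
  set t := (j : ℝ) / k with ht
  have hk' : (0 : ℝ) < k := by exact_mod_cast hk
  have htx : t ≤ x := by rw [ht, div_le_iff₀ hk']; linarith
  have hjk : j ≤ k := by
    have : x < 1 := by linarith
    exact_mod_cast hj.trans (mul_le_of_le_one_right hk'.le this.le)
  have hjt : (j : ℝ) * t ≤ n * x ^ 2 :=
    calc (j : ℝ) * t = j ^ 2 / k := by ring
      _ ≤ (k * x) ^ 2 / k := by gcongr
      _ = k * x ^ 2 := by field_simp
      _ ≤ n * x ^ 2 := by gcongr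
  have hexp : exp (-(2 * (n : ℝ)) / k) = x ^ 2 := by rw [hx, ← exp_nat_mul]; ring_nf
  have hxj : x ^ j = exp (-(n * t)) := by rw [hx, ht, ← exp_nat_mul]; ring_nf
  calc (k * x) ^ j / j ! * exp (-(2 * n * exp (-(2 * (n : ℝ)) / k)) / δ)
      = k ^ j / j ! * exp (-(n * t + 2 * n * x ^ 2 / δ)) := by
        rw [hexp, mul_pow, hxj, neg_add, exp_add, neg_div]; ring
    _ ≤ k ^ j / j ! * exp (-((j + n : ℕ) * (t / (1 - t)))) := by
        gcongr
        push_cast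
        exact add_mul_div_one_sub_le (by positivity) (by positivity) htx hjt hδ hδx
    _ ≤ k ^ j / j ! * (1 - t) ^ (j + n) := by
        gcongr
        exact exp_neg_mul_div_one_sub_le_one_sub_pow _ (by linarith)
    _ ≤ bnk n k j := pow_div_factorial_mul_one_sub_pow_le_bnk n hk hjk

theorem bnk_max_bounds_general (n k : ℕ) (hk : 2 ≤ k) (hkn : k ≤ n) :
    ((k : ℝ) * Real.exp (-(n : ℝ) / k)) ^ ⌊(k : ℝ) * Real.exp (-(n : ℝ) / k)⌋₊ /
        (Nat.factorial ⌊(k : ℝ) * Real.exp (-(n : ℝ) / k)⌋₊) *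
        Real.exp (-(2 * (n : ℝ) * Real.exp (-(2 * (n : ℝ)) / k)) /
          (1 - 1 / Real.exp 1 - 1 / 2)) ≤
      (Finset.range (k + 1)).sup' Finset.nonempty_range_add_one (bnk n k) ∧
    (Finset.range (k + 1)).sup' Finset.nonempty_range_add_one (bnk n k) ≤
      ((k : ℝ) * Real.exp (-(n : ℝ) / k)) ^ ⌊(k : ℝ) * Real.exp (-(n : ℝ) / k)⌋₊ /
        (Nat.factorial ⌊(k : ℝ) * Real.exp (-(n : ℝ) / k)⌋₊) := by
  have hk' : (0 : ℝ) < k := by exact_mod_cast (by omega : 0 < k)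
  have hx : exp (-(n : ℝ) / k) ≤ 1 / exp 1 := by
    rw [one_div, ← exp_neg, exp_le_exp, neg_div, neg_le_neg_iff, le_div_iff₀ hk', one_mul]
    exact_mod_cast hkn
  have he : 1 / exp 1 < 1 / 2 := by
    gcongr
    linarith [add_one_lt_exp one_ne_zero]
  have hlam : 0 ≤ (k : ℝ) * exp (-(n : ℝ) / k) := by positivity
  have hfloor : ⌊(k : ℝ) * exp (-(n : ℝ) / k)⌋₊ < k + 1 := by
    have hexp : exp (-(n : ℝ) / k) ≤ 1 := exp_le_one_iff.2 (div_nonpos_of_nonpos_of_nonneg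
      (neg_nonpos.2 (by positivity)) hk'.le)
    exact Nat.lt_succ_of_le (Nat.floor_le_of_le (mul_le_of_le_one_right hk'.le hexp))
  constructor
  · refine (pow_div_factorial_mul_exp_le_bnk (by omega) hkn (Nat.floor_le hlam) (by linarith)
      (by linarith)).trans (le_sup' _ (mem_range.2 hfloor))
  · refine sup'_le _ _ fun j hj ↦ ?_
    exact (bnk_le_pow_div_factorial n (Nat.lt_succ_iff.1 (mem_range.1 hj))).trans
      (pow_div_factorial_le_floor hlam j)

/-- For `2 ≤ k ≤ n` with `λ := k·e^{−n/k} ≥ 1` and `j₀ := ⌊λ⌋`,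
`(λ^{j₀}/j₀!)·exp(−2n·e^{−2n/k}/(1 − 1/e − 1/2)) ≤ max_{0 ≤ j ≤ k} b_{n,k}(j) ≤ λ^{j₀}/j₀!`. -/
theorem bnk_max_bounds (n k : ℕ) (hk : 2 ≤ k) (hkn : k ≤ n)
    (hlam : 1 ≤ (k : ℝ) * Real.exp (-(n : ℝ) / k)) :
    ((k : ℝ) * Real.exp (-(n : ℝ) / k)) ^ ⌊(k : ℝ) * Real.exp (-(n : ℝ) / k)⌋₊ /
        (Nat.factorial ⌊(k : ℝ) * Real.exp (-(n : ℝ) / k)⌋₊) *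
        Real.exp (-(2 * (n : ℝ) * Real.exp (-(2 * (n : ℝ)) / k)) /
          (1 - 1 / Real.exp 1 - 1 / 2)) ≤
      (Finset.range (k + 1)).sup' Finset.nonempty_range_add_one (bnk n k) ∧
    (Finset.range (k + 1)).sup' Finset.nonempty_range_add_one (bnk n k) ≤
      ((k : ℝ) * Real.exp (-(n : ℝ) / k)) ^ ⌊(k : ℝ) * Real.exp (-(n : ℝ) / k)⌋₊ /
        (Nat.factorial ⌊(k : ℝ) * Real.exp (-(n : ℝ) / k)⌋₊) :=
  bnk_max_bounds_general n k hk hkn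
end

section
/- For all integers n ≥ 1 and k ≥ 1, S(n,k) = (1 − λ/k)^k · Σ_{j=0}^{k} C(k,j)·(−Λ)^j·D_{n,k}(j). -/
open Finset

/-- `D_{n,k}(j) = Σ_{l=0}^{j} C(j,l)·(−1)^{j−l}·(e^{l/k}(1 − l/k))ⁿ`. -/
noncomputable def Dnk (n k j : ℕ) : ℝ :=
  ∑ l ∈ Finset.range (j + 1),
    (j.choose l : ℝ) * (-1) ^ (j - l) * (Real.exp ((l : ℝ) / k) * (1 - (l : ℝ) / k)) ^ n

/-! With `q = e^{-n/k}` one has `(1 - q)^k (-Λ)^j = (1 - q)^{k-j} (-q)^j`, so the right-hand side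
is `Σ_j C(k,j) a^{k-j} b^j Δʲg(0)` with `a = 1 - q`, `b = -q` and `g(l) = (e^{l/k}(1 - l/k))ⁿ`.
Exchanging the sums collapses this to `Σ_l C(k,l) b^l (a - b)^{k-l} g(l)`, and `a - b = 1`.
Finally `q^l` cancels `e^{nl/k}`, leaving the sieve formula for `S(n,k)`. -/

section BinomialTransform

variable {R : Type*} [CommRing R]

theorem sum_Ico_choose_mul_choose_mul_pow (a b : R) {k l : ℕ} (hlk : l ≤ k) :
    ∑ j ∈ Ico l (k + 1),
        (k.choose j : R) * (a ^ (k - j) * b ^ j) * ((j.choose l : R) * (-1) ^ (j - l))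
      = k.choose l * b ^ l * (a - b) ^ (k - l) := by
  rw [sum_Ico_eq_sum_range, show k + 1 - l = k - l + 1 by omega, sub_eq_neg_add, add_pow,
    mul_sum]
  refine sum_congr rfl fun m hm => ?_
  have hm : m ≤ k - l := Nat.lt_succ_iff.mp (mem_range.mp hm)
  have hchoose :
      (k.choose (l + m) : R) * ((l + m).choose l : R) = k.choose l * (k - l).choose m := by
    have := Nat.choose_mul (n := k) (k := l + m) (s := l) (by omega)
    rw [Nat.add_sub_cancel_left] at this
    exact_mod_cast congrArg (Nat.cast : ℕ → R) this
  rw [show k - (l + m) = k - l - m by omega, Nat.add_sub_cancel_left, pow_add, neg_pow]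
  linear_combination (a ^ (k - l - m) * b ^ l * b ^ m * (-1) ^ m) * hchoose

/-- The binomial transform of the forward differences `Δʲf(0)`, in homogeneous form. -/
theorem sum_choose_mul_pow_mul_sum_choose_mul_neg_one_pow (a b : R) (f : ℕ → R) (k : ℕ) :
    ∑ j ∈ range (k + 1), (k.choose j : R) * (a ^ (k - j) * b ^ j) *
        ∑ l ∈ range (j + 1), (j.choose l : R) * (-1) ^ (j - l) * f l
      = ∑ l ∈ range (k + 1), k.choose l * b ^ l * (a - b) ^ (k - l) * f l := by
  simp only [mul_sum, range_eq_Ico]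
  rw [← sum_Ico_Ico_comm]
  refine sum_congr rfl fun l hl => ?_
  have hlk : l ≤ k := Nat.lt_succ_iff.mp (mem_Ico.mp hl).2
  rw [← sum_Ico_choose_mul_choose_mul_pow a b hlk, sum_mul]
  exact sum_congr rfl fun j _ => by ring

end BinomialTransform

theorem one_sub_pow_mul_neg_div_one_sub_pow {K : Type*} [Field K] {q : K} (hq : 1 - q ≠ 0)
    {j k : ℕ} (hjk : j ≤ k) :
    (1 - q) ^ k * (-(q / (1 - q))) ^ j = (1 - q) ^ (k - j) * (-q) ^ j := by
  rw [← Nat.sub_add_cancel hjk, pow_add, Nat.add_sub_cancel, mul_assoc, ← mul_pow, mul_neg,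
    mul_div_cancel₀ _ hq]

/-- The finite-difference identity: with `λ := k·e^{−n/k}` and
`Λ := e^{−n/k}/(1 − e^{−n/k})`,
`S(n,k) = (1 − λ/k)^k · Σ_{j=0}^{k} C(k,j)·(−Λ)^j·D_{n,k}(j)`. -/
theorem Snk_finite_difference_identity (n k : ℕ) (hn : 1 ≤ n) (hk : 1 ≤ k) :
    Snk n k =
      (1 - (k : ℝ) * Real.exp (-(n : ℝ) / k) / k) ^ k *
        ∑ j ∈ Finset.range (k + 1),
          (k.choose j : ℝ) *
            (-(Real.exp (-(n : ℝ) / k) / (1 - Real.exp (-(n : ℝ) / k)))) ^ j *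
            Dnk n k j := by
  set q := Real.exp (-(n : ℝ) / k) with hq_def
  have hk₀ : (0 : ℝ) < k := by exact_mod_cast hk
  have hn₀ : (0 : ℝ) < n := by exact_mod_cast hn
  have hq : 1 - q ≠ 0 :=
    (sub_pos.mpr (Real.exp_lt_one_iff.mpr (div_neg_of_neg_of_pos (neg_neg_of_pos hn₀) hk₀))).ne'
  have hweight (l : ℕ) : (-q) ^ l * (Real.exp ((l : ℝ) / k) * (1 - (l : ℝ) / k)) ^ n
      = (-1) ^ l * (1 - (l : ℝ) / k) ^ n := by
    rw [neg_pow, mul_pow, hq_def, ← Real.exp_nat_mul, ← Real.exp_nat_mul,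
      show (l : ℝ) * (-(n : ℝ) / k) = -((n : ℝ) * (l / k)) by ring, Real.exp_neg]
    field_simp
  rw [mul_div_cancel_left₀ q hk₀.ne', mul_sum]
  calc Snk n k
      = ∑ l ∈ range (k + 1), (k.choose l : ℝ) * (-q) ^ l * (1 - q - -q) ^ (k - l) *
          (Real.exp ((l : ℝ) / k) * (1 - (l : ℝ) / k)) ^ n := by
        refine sum_congr rfl fun l _ => ?_
        rw [sub_neg_eq_add, sub_add_cancel, one_pow, mul_one, mul_assoc _ ((-q) ^ l), hweight,
          mul_assoc]
    _ = ∑ j ∈ range (k + 1), (k.choose j : ℝ) * ((1 - q) ^ (k - j) * (-q) ^ j) * Dnk n k j :=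
        (sum_choose_mul_pow_mul_sum_choose_mul_neg_one_pow _ _ _ k).symm
    _ = _ := sum_congr rfl fun j hj => by
        rw [← one_sub_pow_mul_neg_div_one_sub_pow hq (Nat.lt_succ_iff.mp (mem_range.mp hj))]
        ring
end

section
/- For all integers n ≥ 1, k ≥ 1, and all integers j with 0 ≤ j < k/√n, |D_{n,k}(j)| ≤ (j!/(1 − j·√n/k)^{j+1})·(√n/k)^j. -/
/-!
Write `(e^y (1 - y))^n = ∑ b_m y^m`. Then `D_{n,k}(j)` is the `j`-th forward difference at `0` of
`l ↦ ∑ b_m (l/k)^m`, and `Δ^j (l ↦ l^m) (0) = j! S(m, j)` with `S` the Stirling numbers of the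
second kind, so `D_{n,k}(j) = j! ∑ b_m S(m, j) k^{-m}`. The series `f = (e^y (1 - y))^n` satisfies
`(1 - y) f' = -n y f`, i.e. `(m + 2) b_{m+2} = (m + 1) b_{m+1} - n b_m`, and since `n = √n²` this
recursion propagates `|b_m| ≤ √n^m`. With `ε = √n/k` this leaves
`|D_{n,k}(j)| ≤ j! ∑ S(m, j) ε^m = j! ε^j / ∏_{i=1}^{j} (1 - iε)`, and every factor of the product
is at least `1 - jε`.
-/

open Finset

open fwdDiff PowerSeries

section FwdDiff

variable {R : Type*} [CommRing R]

theorem fwdDiff_iter_eq_sum_choose (f : ℕ → R) (j y : ℕ) :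
    (Δ_[1])^[j] f y = ∑ l ∈ range (j + 1), (j.choose l : R) * (-1) ^ (j - l) * f (y + l) := by
  rw [fwdDiff_iter_eq_sum_shift]
  refine sum_congr rfl fun l _ => ?_
  simp [zsmul_eq_mul, mul_comm]

theorem fwdDiff_iter_succ_pow_succ (j m : ℕ) :
    (Δ_[1])^[j + 1] (fun x : ℕ => (x : R) ^ (m + 1)) 0 =
      (j + 1) * ((Δ_[1])^[j + 1] (fun x : ℕ => (x : R) ^ m) 0 +
        (Δ_[1])^[j] (fun x : ℕ => (x : R) ^ m) 0) := by
  have hshift : (Δ_[1])^[j + 1] (fun x : ℕ => (x : R) ^ m) 0 +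
      (Δ_[1])^[j] (fun x : ℕ => (x : R) ^ m) 0 = (Δ_[1])^[j] (fun x : ℕ => (x : R) ^ m) 1 := by
    rw [Function.iterate_succ_apply', fwdDiff, zero_add, sub_add_cancel]
  rw [hshift, fwdDiff_iter_eq_sum_choose, fwdDiff_iter_eq_sum_choose, sum_range_succ', mul_sum]
  simp only [zero_add, Nat.cast_zero, zero_pow m.succ_ne_zero, mul_zero, add_zero]
  refine sum_congr rfl fun l _ => ?_
  have h : ((j + 1).choose (l + 1) : R) * (l + 1) = (j + 1) * j.choose l := by
    exact_mod_cast congrArg (Nat.cast (R := R)) (Nat.add_one_mul_choose_eq j l).symm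
  simp only [Nat.add_sub_add_right, Nat.cast_add, Nat.cast_one, add_comm 1 l, pow_succ]
  linear_combination (-1) ^ (j - l) * ((l : R) + 1) ^ m * h

theorem fwdDiff_iter_pow_eq_factorial_mul_stirlingSecond (j m : ℕ) :
    (Δ_[1])^[j] (fun x : ℕ => (x : R) ^ m) 0 = j.factorial * Nat.stirlingSecond m j := by
  induction m generalizing j with
  | zero =>
    cases j with
    | zero => simp
    | succ j =>
      simp only [pow_zero]
      rw [Function.iterate_succ_apply, fwdDiff_const, Function.iterate_fixed (fwdDiff_const _ _)]
      simp
  | succ m ih =>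
    cases j with
    | zero => simp
    | succ j =>
      rw [fwdDiff_iter_succ_pow_succ, ih, ih, Nat.stirlingSecond_succ_succ, Nat.factorial_succ]
      push_cast
      ring

variable [TopologicalSpace R] [IsTopologicalRing R]

theorem hasSum_fwdDiff_iter_of_hasSum {c g : ℕ → R} {t : R}
    (h : ∀ l : ℕ, HasSum (fun m => c m * (l * t) ^ m) (g l)) (j : ℕ) :
    HasSum (fun m => c m * t ^ m * (j.factorial * Nat.stirlingSecond m j)) ((Δ_[1])^[j] g 0) := by
  rw [fwdDiff_iter_eq_sum_choose]
  refine (hasSum_sum fun l _ => (h (0 + l)).mul_left _).congr_fun fun m => ?_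
  rw [← fwdDiff_iter_pow_eq_factorial_mul_stirlingSecond, fwdDiff_iter_eq_sum_choose, mul_sum]
  refine sum_congr rfl fun l _ => ?_
  ring

end FwdDiff

theorem hasSum_of_succ_eq_mul_add {a c : ℕ → ℝ} {r C : ℝ} (ha : ∀ m, 0 ≤ a m)
    (hc : ∀ m, 0 ≤ c m) (hr : r < 1) (hcC : HasSum c C)
    (hrec : ∀ m, a (m + 1) = r * a m + c m) :
    HasSum a ((a 0 + C) / (1 - r)) := by
  have hr' : 0 < 1 - r := sub_pos.mpr hr
  have hpartial : ∀ M, ∑ m ∈ range (M + 1), a m =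
      a 0 + r * ∑ m ∈ range M, a m + ∑ m ∈ range M, c m := by
    intro M
    rw [sum_range_succ', add_comm, mul_sum, add_assoc, ← sum_add_distrib]
    simp only [hrec]
  have hsum : Summable a := by
    refine summable_of_sum_range_le (c := (a 0 + C) / (1 - r)) ha fun M => ?_
    have hmono : ∑ m ∈ range M, a m ≤ ∑ m ∈ range (M + 1), a m :=
      sum_le_sum_of_subset_of_nonneg (range_subset_range.mpr M.le_succ) fun m _ _ => ha m
    have hcM : ∑ m ∈ range M, c m ≤ C := sum_le_hasSum _ (fun m _ => hc m) hcC
    rw [le_div_iff₀ hr']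
    linarith [hpartial M]
  have htsum : ∑' m, a m = a 0 + r * ∑' m, a m + C := calc
    ∑' m, a m = a 0 + ∑' m, (r * a m + c m) := by rw [hsum.tsum_eq_zero_add]; simp only [hrec]
    _ = a 0 + r * ∑' m, a m + C := by
      rw [(hsum.mul_left r).tsum_add hcC.summable, tsum_mul_left, hcC.tsum_eq, add_assoc]
  convert hsum.hasSum
  rw [div_eq_iff hr'.ne']
  linarith

theorem hasSum_stirlingSecond_mul_pow {x : ℝ} (hx : 0 ≤ x) {j : ℕ} (hjx : j * x < 1) :
    HasSum (fun m => (Nat.stirlingSecond m j : ℝ) * x ^ m)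
      (x ^ j / ∏ i ∈ range j, (1 - (i + 1) * x)) := by
  induction j with
  | zero =>
    convert hasSum_ite_eq 0 (1 : ℝ) using 1
    · funext m
      cases m <;> simp
    · simp
  | succ j ih =>
    push_cast at hjx
    have h := hasSum_of_succ_eq_mul_add
      (a := fun m => (Nat.stirlingSecond m (j + 1) : ℝ) * x ^ m) (fun m => by positivity)
      (fun m => by positivity) hjx ((ih (by nlinarith)).mul_left x) fun m => by
        simp only [Nat.stirlingSecond_succ_succ]; push_cast; ring
    convert h using 1
    rw [Nat.stirlingSecond_zero_succ, prod_range_succ, ← div_div]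
    push_cast
    ring

theorem pow_le_prod_one_sub_mul {x : ℝ} (hx : 0 ≤ x) {j : ℕ} (hjx : j * x ≤ 1) :
    (1 - j * x) ^ j ≤ ∏ i ∈ range j, (1 - (i + 1) * x) := by
  calc (1 - j * x) ^ j = ∏ _i ∈ range j, (1 - j * x) := by rw [prod_const, card_range]
    _ ≤ ∏ i ∈ range j, (1 - (i + 1) * x) := by
      refine prod_le_prod (fun _ _ => by linarith) fun i hi => ?_
      have : (i : ℝ) + 1 ≤ j := by exact_mod_cast mem_range.mp hi
      nlinarith

section ExpMulOneSubX

variable {A : Type*} [CommRing A] [Algebra ℚ A]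

theorem one_sub_X_mul_derivative_exp_mul_one_sub_X_pow (n : ℕ) :
    (1 - X) * d⁄dX A ((exp A * (1 - X)) ^ n) = -((n : A⟦X⟧) * X * (exp A * (1 - X)) ^ n) := by
  cases n with
  | zero => simp
  | succ n =>
    have hd : d⁄dX A (exp A * (1 - X)) = -(X * exp A) := by
      rw [Derivation.leibniz, derivative_exp, map_sub, derivative_one, derivative_X]
      simp only [smul_eq_mul]
      ring
    rw [derivative_pow, hd, Nat.add_sub_cancel, pow_succ]
    push_cast
    ring

theorem coeff_one_exp_mul_one_sub_X_pow (n : ℕ) : coeff 1 ((exp A * (1 - X)) ^ n) = 0 := by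
  have h := congrArg (coeff 0) (one_sub_X_mul_derivative_exp_mul_one_sub_X_pow (A := A) n)
  rw [sub_mul, one_mul, map_sub, mul_assoc, map_neg, ← map_natCast (C (R := A)), coeff_C_mul] at h
  simpa only [coeff_zero_X_mul, coeff_derivative, mul_zero, neg_zero, sub_zero, Nat.cast_zero,
    zero_add, mul_one] using h

theorem coeff_exp_mul_one_sub_X_pow_add_two (n m : ℕ) :
    ((m : A) + 2) * coeff (m + 2) ((exp A * (1 - X)) ^ n) =
      ((m : A) + 1) * coeff (m + 1) ((exp A * (1 - X)) ^ n) -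
        n * coeff m ((exp A * (1 - X)) ^ n) := by
  have h := congrArg (coeff (m + 1)) (one_sub_X_mul_derivative_exp_mul_one_sub_X_pow (A := A) n)
  rw [sub_mul, one_mul, map_sub, mul_assoc, map_neg, ← map_natCast (C (R := A)), coeff_C_mul] at h
  simp only [coeff_succ_X_mul, coeff_derivative] at h
  push_cast at h
  linear_combination h

end ExpMulOneSubX

theorem abs_coeff_exp_mul_one_sub_X_pow_le (n m : ℕ) :
    |coeff m ((exp ℝ * (1 - X)) ^ n)| ≤ √n ^ m := by
  set b := fun m => coeff m ((exp ℝ * (1 - X)) ^ n)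
  have hmono : ∀ m, √n ^ (m + 1) ≤ √n ^ (m + 2) := by
    intro m
    rcases Nat.eq_zero_or_pos n with rfl | hn
    · simp
    · exact pow_le_pow_right₀ (Real.one_le_sqrt.mpr (by exact_mod_cast hn)) (by omega)
  suffices h : ∀ m, |b m| ≤ √n ^ m ∧ |b (m + 1)| ≤ √n ^ (m + 1) from (h m).1
  intro m
  induction m with
  | zero => simp [b, coeff_one_exp_mul_one_sub_X_pow]
  | succ m ih =>
    refine ⟨ih.2, ?_⟩
    have hrec := coeff_exp_mul_one_sub_X_pow_add_two (A := ℝ) n m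
    have hn : (n : ℝ) * √n ^ m = √n ^ (m + 2) := by
      rw [pow_add, Real.sq_sqrt n.cast_nonneg, mul_comm]
    have h2 : ((m : ℝ) + 2) * |b (m + 2)| ≤ ((m : ℝ) + 2) * √n ^ (m + 2) := calc
      ((m : ℝ) + 2) * |b (m + 2)| = |((m : ℝ) + 1) * b (m + 1) - n * b m| := by
        rw [← hrec, abs_mul, abs_of_pos (by positivity : (0 : ℝ) < m + 2)]
      _ ≤ ((m : ℝ) + 1) * |b (m + 1)| + n * |b m| := by
        refine (abs_sub _ _).trans_eq ?_
        rw [abs_mul, abs_mul, abs_of_pos (by positivity : (0 : ℝ) < m + 1), Nat.abs_cast]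
      _ ≤ ((m : ℝ) + 1) * √n ^ (m + 2) + n * √n ^ m := by
        gcongr
        exacts [ih.2.trans (hmono m), ih.1]
      _ = ((m : ℝ) + 2) * √n ^ (m + 2) := by rw [hn]; ring
    exact le_of_mul_le_mul_left h2 (by positivity)

section HasSum

variable {R : Type*} [CommRing R] [TopologicalSpace R] [IsTopologicalRing R]

theorem HasSum.coeff_one_sub_X_mul {f : R⟦X⟧} {y a : R}
    (h : HasSum (fun m => coeff m f * y ^ m) a) :
    HasSum (fun m => coeff m ((1 - X) * f) * y ^ m) ((1 - y) * a) := by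
  have hX : HasSum (fun m => coeff m (X * f) * y ^ m) (y * a) := by
    rw [← hasSum_nat_add_iff' 1]
    simpa [coeff_succ_X_mul, pow_succ, mul_left_comm _ y, mul_comm _ y] using h.mul_left y
  simpa [sub_mul] using h.sub hX

theorem HasSum.coeff_one_sub_X_pow_mul {f : R⟦X⟧} {y a : R}
    (h : HasSum (fun m => coeff m f * y ^ m) a) (n : ℕ) :
    HasSum (fun m => coeff m ((1 - X) ^ n * f) * y ^ m) ((1 - y) ^ n * a) := by
  induction n with
  | zero => simpa using h
  | succ n ih => simpa [pow_succ', mul_assoc] using ih.coeff_one_sub_X_mul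

end HasSum

theorem hasSum_coeff_rescale_exp_mul_pow (a y : ℝ) :
    HasSum (fun m => coeff m (rescale a (exp ℝ)) * y ^ m) (Real.exp (a * y)) := by
  rw [Real.exp_eq_exp_ℝ]
  refine (NormedSpace.expSeries_div_hasSum_exp (a * y)).congr_fun fun m => ?_
  simp only [coeff_rescale, coeff_exp, div_eq_inv_mul, mul_one, map_inv₀, map_natCast, mul_pow]
  ring

theorem hasSum_coeff_exp_mul_one_sub_X_pow (n : ℕ) (y : ℝ) :
    HasSum (fun m => coeff m ((exp ℝ * (1 - X)) ^ n) * y ^ m) ((Real.exp y * (1 - y)) ^ n) := by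
  have h := (hasSum_coeff_rescale_exp_mul_pow n y).coeff_one_sub_X_pow_mul n
  rwa [← exp_pow_eq_rescale_exp, ← mul_pow, mul_comm (1 - X), Real.exp_nat_mul, ← mul_pow,
    mul_comm (1 - y)] at h

theorem Dnk_eq_fwdDiff_iter (n k j : ℕ) :
    Dnk n k j =
      (Δ_[1])^[j] (fun l : ℕ => (Real.exp (l * (k : ℝ)⁻¹) * (1 - l * (k : ℝ)⁻¹)) ^ n) 0 := by
  simp [Dnk, fwdDiff_iter_eq_sum_choose, div_eq_mul_inv]

theorem abs_Dnk_le_factorial_mul_div_prod (n k j : ℕ) (hj : j * (√n / k) < 1) :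
    |Dnk n k j| ≤ j.factorial * ((√n / k) ^ j / ∏ i ∈ range j, (1 - (i + 1) * (√n / k))) := by
  have hD : HasSum (fun m => coeff m ((exp ℝ * (1 - X)) ^ n) * (k : ℝ)⁻¹ ^ m *
      (j.factorial * Nat.stirlingSecond m j)) (Dnk n k j) := by
    rw [Dnk_eq_fwdDiff_iter]
    exact hasSum_fwdDiff_iter_of_hasSum (fun l => hasSum_coeff_exp_mul_one_sub_X_pow n _) j
  have hS := (hasSum_stirlingSecond_mul_pow (by positivity) hj).mul_left (j.factorial : ℝ)
  refine hD.norm_le_of_bounded hS fun m => ?_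
  rw [Real.norm_eq_abs, abs_mul, abs_mul, abs_pow, abs_inv, Nat.abs_cast,
    abs_of_nonneg (by positivity : (0 : ℝ) ≤ j.factorial * Nat.stirlingSecond m j)]
  calc _ ≤ √n ^ m * (k : ℝ)⁻¹ ^ m * (j.factorial * Nat.stirlingSecond m j) := by
        gcongr
        exact abs_coeff_exp_mul_one_sub_X_pow_le n m
    _ = _ := by rw [div_eq_mul_inv, mul_pow]; ring

theorem Dnk_abs_le_of_lt_general (n k : ℕ) (j : ℕ)
    (hj : (j : ℝ) < (k : ℝ) / Real.sqrt n) :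
    |Dnk n k j| ≤
      (Nat.factorial j : ℝ) / (1 - (j : ℝ) * Real.sqrt n / k) ^ (j + 1) *
        (Real.sqrt n / k) ^ j := by
  obtain ⟨hk, hn⟩ : 0 < (k : ℝ) ∧ 0 < √n := by
    rcases div_pos_iff.mp ((Nat.cast_nonneg j).trans_lt hj) with h | h
    · exact h
    · exact absurd h.1 (not_lt.mpr k.cast_nonneg)
  have hjε : j * (√n / k) < 1 := by
    rw [← mul_div_assoc, div_lt_one hk]
    exact (lt_div_iff₀ hn).mp hj
  set ε := √n / k
  have hpow : (1 - j * ε) ^ (j + 1) ≤ ∏ i ∈ range j, (1 - (i + 1) * ε) :=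
    (pow_le_pow_of_le_one (by linarith) (sub_le_self _ (by positivity)) j.le_succ).trans
      (pow_le_prod_one_sub_mul (by positivity) hjε.le)
  calc |Dnk n k j| ≤ j.factorial * (ε ^ j / ∏ i ∈ range j, (1 - (i + 1) * ε)) :=
        abs_Dnk_le_factorial_mul_div_prod n k j hjε
    _ ≤ j.factorial * (ε ^ j / (1 - j * ε) ^ (j + 1)) := by gcongr
    _ = _ := by rw [mul_div_assoc]; ring

/-- For `n ≥ 1`, `k ≥ 1` and `0 ≤ j < k/√n`,
`|D_{n,k}(j)| ≤ (j!/(1 − j√n/k)^{j+1})·(√n/k)^j`. -/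
theorem Dnk_abs_le_of_lt (n k : ℕ) (hn : 1 ≤ n) (hk : 1 ≤ k) (j : ℕ)
    (hj : (j : ℝ) < (k : ℝ) / Real.sqrt n) :
    |Dnk n k j| ≤
      (Nat.factorial j : ℝ) / (1 - (j : ℝ) * Real.sqrt n / k) ^ (j + 1) *
        (Real.sqrt n / k) ^ j :=
  Dnk_abs_le_of_lt_general n k j hj
end

section
/- For every natural number n, the quantities τ_m(n) satisfy τ_0(n) = 1, τ_1(n) = 0, and for every integer m ≥ 2 the recurrence τ_m(n) = (m − 1)·(τ_{m−1}(n) − n·τ_{m−2}(n)). -/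
/-- `τ_m(n)` is the `m`-th derivative at `0` of `x ↦ (eˣ(1−x))ⁿ`, i.e. the
coefficients in `(eˣ(1−x))ⁿ = Σ_m (τ_m(n)/m!)·xᵐ`. -/
noncomputable def tau (m n : ℕ) : ℝ :=
  iteratedDeriv m (fun x : ℝ => (Real.exp x * (1 - x)) ^ n) 0

/-!
`f(x) = (eˣ(1 − x))ⁿ` satisfies the first-order linear ODE `(1 − x) f' = −n x f`, since
`(eˣ(1 − x))' = −x eˣ`. Differentiating it `k` times (Leibniz, with factors of degree one) gives
`(1 − x) f⁽ᵏ⁺¹⁾ − k f⁽ᵏ⁾ = −n x f⁽ᵏ⁾ − n k f⁽ᵏ⁻¹⁾`, and at `x = 0` this is the recurrence.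
-/

open scoped ContDiff

section LinearODE

variable {𝕜 : Type*} [NontriviallyNormedField 𝕜] {f : 𝕜 → 𝕜}

theorem ContDiff.hasDerivAt_iteratedDeriv (hf : ContDiff 𝕜 ∞ f) (k : ℕ) (x : 𝕜) :
    HasDerivAt (iteratedDeriv k f) (iteratedDeriv (k + 1) f x) x := by
  rw [iteratedDeriv_succ]
  exact (hf.differentiable_iteratedDeriv k (mod_cast ENat.natCast_lt_top k) x).hasDerivAt

/-- At `k = 0` the last term carries the factor `k`, so the truncation `0 - 1 = 0` is harmless. -/
theorem one_sub_mul_iteratedDeriv_succ_of_ode (hf : ContDiff 𝕜 ∞ f) (c : 𝕜)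
    (hode : ∀ x, (1 - x) * deriv f x = -c * x * f x) (k : ℕ) (x : 𝕜) :
    (1 - x) * iteratedDeriv (k + 1) f x
      = (k - c * x) * iteratedDeriv k f x - c * k * iteratedDeriv (k - 1) f x := by
  induction k generalizing x with
  | zero => simpa using hode x
  | succ k ih =>
    have hlhs : HasDerivAt (fun y => (1 - y) * iteratedDeriv (k + 1) f y)
        ((0 - 1) * iteratedDeriv (k + 1) f x + (1 - x) * iteratedDeriv (k + 2) f x) x :=
      ((hasDerivAt_const x 1).sub (hasDerivAt_id x)).mul (hf.hasDerivAt_iteratedDeriv (k + 1) x)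
    have hrhs : HasDerivAt
        (fun y => (k - c * y) * iteratedDeriv k f y - c * k * iteratedDeriv (k - 1) f y)
        ((0 - c * 1) * iteratedDeriv k f x + (k - c * x) * iteratedDeriv (k + 1) f x
          - c * k * iteratedDeriv (k - 1 + 1) f x) x :=
      (((hasDerivAt_const x _).sub ((hasDerivAt_id x).const_mul c)).mul
        (hf.hasDerivAt_iteratedDeriv k x)).sub
        ((hf.hasDerivAt_iteratedDeriv (k - 1) x).const_mul (c * k))
    have hderiv := hlhs.unique (funext ih ▸ hrhs)
    have htrunc : (k : 𝕜) * iteratedDeriv (k - 1 + 1) f x = k * iteratedDeriv k f x := by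
      rcases k with _ | k <;> simp
    push_cast
    linear_combination hderiv - c * htrunc

theorem iteratedDeriv_succ_zero_of_ode (hf : ContDiff 𝕜 ∞ f) (c : 𝕜)
    (hode : ∀ x, (1 - x) * deriv f x = -c * x * f x) (k : ℕ) :
    iteratedDeriv (k + 1) f 0 = k * (iteratedDeriv k f 0 - c * iteratedDeriv (k - 1) f 0) := by
  have h := one_sub_mul_iteratedDeriv_succ_of_ode hf c hode k 0
  simp only [sub_zero, one_mul, mul_zero] at h
  linear_combination h

end LinearODE

theorem contDiff_exp_mul_one_sub_pow (n : ℕ) :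
    ContDiff ℝ ∞ (fun x : ℝ => (Real.exp x * (1 - x)) ^ n) :=
  (Real.contDiff_exp.mul (contDiff_const.sub contDiff_id)).pow n

theorem one_sub_mul_deriv_exp_mul_one_sub_pow (n : ℕ) (x : ℝ) :
    (1 - x) * deriv (fun x : ℝ => (Real.exp x * (1 - x)) ^ n) x
      = -n * x * (Real.exp x * (1 - x)) ^ n := by
  have hbase : HasDerivAt (fun x : ℝ => Real.exp x * (1 - x))
      (Real.exp x * (1 - x) + Real.exp x * (0 - 1)) x :=
    (Real.hasDerivAt_exp x).mul ((hasDerivAt_const x 1).sub (hasDerivAt_id x))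
  have hpow : HasDerivAt (fun x : ℝ => (Real.exp x * (1 - x)) ^ n)
      (n * (Real.exp x * (1 - x)) ^ (n - 1) * (Real.exp x * (1 - x) + Real.exp x * (0 - 1))) x :=
    hbase.pow n
  rw [hpow.deriv]
  rcases n with _ | n
  · simp
  · simp only [Nat.add_sub_cancel, pow_succ]
    push_cast
    ring

/-- `τ_0(n) = 1`, `τ_1(n) = 0`, and for `m ≥ 2`,
`τ_m(n) = (m − 1)(τ_{m−1}(n) − n·τ_{m−2}(n))`. -/
theorem tau_recurrence (n : ℕ) :
    tau 0 n = 1 ∧ tau 1 n = 0 ∧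
      ∀ m : ℕ, 2 ≤ m → tau m n = ((m : ℝ) - 1) * (tau (m - 1) n - (n : ℝ) * tau (m - 2) n) := by
  have hrec := iteratedDeriv_succ_zero_of_ode (contDiff_exp_mul_one_sub_pow n) (n : ℝ)
    (one_sub_mul_deriv_exp_mul_one_sub_pow n)
  refine ⟨by simp [tau], by simpa [tau] using hrec 0, fun m hm => ?_⟩
  obtain ⟨k, rfl⟩ : ∃ k, m = k + 2 := ⟨m - 2, by omega⟩
  rw [show ((k + 2 : ℕ) : ℝ) - 1 = ((k + 1 : ℕ) : ℝ) by push_cast; ring]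
  exact hrec (k + 1)
end

section
/- For all integers n ≥ 1, k ≥ 1, and m ≥ 0, Σ_{j=0}^{k} C(k,j)·(−1)^j·j^m·e^{−(n/k)·j} = (1 − e^{−n/k})^k · Σ_{l=0}^{min(m,k)} Stirling(m,l)·C(k,l)·l!·(−Λ)^l, with the convention 0^0 = 1. -/
/-! `l! S(m,l)`, with `S = stirling2`, is the `l`-th forward difference of `x ↦ x ^ m` at `0`, so
Newton's formula gives `j ^ m = Σ_l C(j,l) l! S(m,l)`, and `S(m,l) = 0` for `l > m`.
Substituting this into the left side and exchanging the sums leaves, with `y = -e^{-n/k}`,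
the inner sums `Σ_j C(k,j) C(j,l) y^j = C(k,l) y^l (1+y)^{k-l}`. Pulling out
`(1+y)^k = (1 - e^{-n/k})^k` turns `y^l (1+y)^{-l}` into `(-Λ)^l`. -/

open Finset

/-- Stirling numbers of the second kind (as real numbers), via the sieve formula
`Stirling(m,l) = (1/l!)·Σ_{j=0}^{l} (−1)^j·C(l,j)·(l−j)^m`. -/
noncomputable def stirling2 (m l : ℕ) : ℝ :=
  (Nat.factorial l : ℝ)⁻¹ *
    ∑ j ∈ Finset.range (l + 1), (-1 : ℝ) ^ j * (l.choose j : ℝ) * ((l : ℝ) - j) ^ m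

open fwdDiff

theorem factorial_mul_stirling2_eq_fwdDiff_iter (m l : ℕ) :
    (l.factorial : ℝ) * stirling2 m l = Δ_[1] ^[l] (fun x : ℝ ↦ x ^ m) 0 := by
  rw [stirling2, mul_inv_cancel_left₀ (by positivity), fwdDiff_iter_eq_sum_shift,
    ← sum_range_reflect]
  refine sum_congr rfl fun j hj ↦ ?_
  have hjl : j ≤ l := Nat.lt_succ_iff.mp (mem_range.mp hj)
  rw [add_tsub_cancel_right, Nat.choose_symm hjl, Nat.cast_sub hjl]
  simp [zsmul_eq_mul]

theorem stirling2_eq_zero_of_lt {m l : ℕ} (h : m < l) : stirling2 m l = 0 := by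
  have := factorial_mul_stirling2_eq_fwdDiff_iter m l
  rw [fwdDiff_iter_pow_eq_zero_of_lt h, Pi.zero_apply] at this
  exact (mul_eq_zero.mp this).resolve_left (by positivity)

theorem pow_eq_sum_stirling2 {j N : ℕ} (hj : j ≤ N) (m : ℕ) :
    (j : ℝ) ^ m = ∑ l ∈ range (N + 1), (j.choose l : ℝ) * l.factorial * stirling2 m l := by
  have newton := shift_eq_sum_fwdDiff_iter 1 (fun x : ℝ ↦ x ^ m) j 0
  simp only [zero_add, nsmul_eq_mul, mul_one, ← factorial_mul_stirling2_eq_fwdDiff_iter] at newton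
  rw [newton]
  refine (sum_subset (range_subset_range.mpr (by omega)) fun l _ hlj ↦ ?_).trans
    (sum_congr rfl fun l _ ↦ by ring)
  rw [Nat.choose_eq_zero_of_lt (by simpa using hlj), Nat.cast_zero, zero_mul]

theorem sum_choose_mul_choose_mul_pow {R : Type*} [CommSemiring R] {l k : ℕ} (hlk : l ≤ k)
    (y : R) :
    ∑ j ∈ range (k + 1), (k.choose j : R) * j.choose l * y ^ j =
      k.choose l * y ^ l * (y + 1) ^ (k - l) := by
  obtain ⟨d, rfl⟩ := Nat.exists_eq_add_of_le hlk
  rw [add_assoc, sum_range_add, sum_eq_zero fun j hj ↦ by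
    simp [Nat.choose_eq_zero_of_lt (mem_range.mp hj)], zero_add, add_tsub_cancel_left, add_pow,
    mul_sum]
  refine sum_congr rfl fun s _ ↦ ?_
  have h := Nat.choose_mul (n := l + d) (k := l + s) (s := l) (Nat.le_add_right l s)
  rw [add_tsub_cancel_left, add_tsub_cancel_left] at h
  rw [← Nat.cast_mul, h, pow_add]
  push_cast
  ring

theorem sum_choose_mul_pow_mul_pow_eq_sum_stirling2 (k m : ℕ) (y : ℝ) :
    ∑ j ∈ range (k + 1), (k.choose j : ℝ) * (j : ℝ) ^ m * y ^ j =
      ∑ l ∈ range (k + 1),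
        stirling2 m l * k.choose l * l.factorial * y ^ l * (y + 1) ^ (k - l) := by
  calc ∑ j ∈ range (k + 1), (k.choose j : ℝ) * (j : ℝ) ^ m * y ^ j
      = ∑ j ∈ range (k + 1), ∑ l ∈ range (k + 1),
          (k.choose j : ℝ) * j.choose l * y ^ j * (l.factorial * stirling2 m l) := by
        refine sum_congr rfl fun j hj ↦ ?_
        rw [pow_eq_sum_stirling2 (Nat.lt_succ_iff.mp (mem_range.mp hj)), mul_sum, sum_mul]
        exact sum_congr rfl fun l _ ↦ by ring
    _ = ∑ l ∈ range (k + 1),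
          (∑ j ∈ range (k + 1), (k.choose j : ℝ) * j.choose l * y ^ j) *
            (l.factorial * stirling2 m l) := by
        rw [sum_comm]
        simp_rw [sum_mul]
    _ = _ := sum_congr rfl fun l hl ↦ by
        rw [sum_choose_mul_choose_mul_pow (Nat.lt_succ_iff.mp (mem_range.mp hl))]
        ring

/-- For `n ≥ 1`, `k ≥ 1`, `m ≥ 0`,
`Σ_{j=0}^{k} C(k,j)(−1)^j j^m e^{−(n/k)j}
  = (1 − e^{−n/k})^k · Σ_{l=0}^{min(m,k)} Stirling(m,l)·C(k,l)·l!·(−Λ)^l`,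
where `Λ := e^{−n/k}/(1 − e^{−n/k})` and `0^0 = 1`. -/
theorem charlier_sum_identity (n k m : ℕ) (hn : 1 ≤ n) (hk : 1 ≤ k) :
    ∑ j ∈ Finset.range (k + 1),
        (k.choose j : ℝ) * (-1) ^ j * (j : ℝ) ^ m * Real.exp (-((n : ℝ) / k) * j) =
      (1 - Real.exp (-(n : ℝ) / k)) ^ k *
        ∑ l ∈ Finset.range (min m k + 1),
          stirling2 m l * (k.choose l : ℝ) * (Nat.factorial l : ℝ) *
            (-(Real.exp (-(n : ℝ) / k) / (1 - Real.exp (-(n : ℝ) / k)))) ^ l := by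
  set x := Real.exp (-(n : ℝ) / k)
  have hx : 1 - x ≠ 0 := by
    refine (sub_pos.mpr (Real.exp_lt_one_iff.mpr ?_)).ne'
    rw [neg_div, neg_lt_zero]
    positivity
  have hsummand (j : ℕ) : (-1 : ℝ) ^ j * Real.exp (-((n : ℝ) / k) * j) = (-x) ^ j := by
    rw [neg_pow x, ← Real.exp_nat_mul, neg_div, mul_comm (j : ℝ)]
  have htrunc : ∑ l ∈ range (min m k + 1),
      stirling2 m l * (k.choose l : ℝ) * l.factorial * (-(x / (1 - x))) ^ l =
      ∑ l ∈ range (k + 1),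
        stirling2 m l * (k.choose l : ℝ) * l.factorial * (-(x / (1 - x))) ^ l :=
    sum_subset (range_subset_range.mpr (by omega)) fun l hl hlm ↦ by
      rw [stirling2_eq_zero_of_lt (by simp at hl hlm; omega), zero_mul, zero_mul, zero_mul]
  calc _ = ∑ j ∈ range (k + 1), (k.choose j : ℝ) * (j : ℝ) ^ m * (-x) ^ j :=
        sum_congr rfl fun j _ ↦ by rw [← hsummand]; ring
    _ = _ := by
      rw [sum_choose_mul_pow_mul_pow_eq_sum_stirling2, htrunc, mul_sum]
      refine sum_congr rfl fun l hl ↦ ?_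
      rw [neg_add_eq_sub, ← pow_sub_mul_pow (1 - x) (Nat.lt_succ_iff.mp (mem_range.mp hl)),
        ← neg_div, div_pow]
      field_simp
end

section
/- For every natural number n ≥ 1, every integer m₀ ≥ 1, and every real x with 0 ≤ x ≤ 1, |(e^x·(1 − x))^n − Σ_{m=0}^{m₀−1} (τ_m(n)/m!)·x^m| ≤ m₀·2^{m₀}·(x·√n)^{m₀}. -/
open Finset

noncomputable def aa (n j : ℕ) : ℝ := (-1:ℝ)^j * (n.choose j : ℝ)
noncomputable def bb (n k : ℕ) : ℝ := (n:ℝ)^k / (Nat.factorial k : ℝ)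
noncomputable def cc (n m : ℕ) : ℝ := ∑ j ∈ Finset.range (m+1), aa n j * bb n (m-j)

lemma summable_aa (n : ℕ) (x : ℝ) : Summable fun j => ‖aa n j * x^j‖ := by
  apply summable_of_ne_finset_zero (s := Finset.range (n+1))
  intro j hj
  rw [Finset.mem_range, not_lt] at hj
  simp [aa, Nat.choose_eq_zero_of_lt (Nat.lt_of_succ_le hj)]

lemma summable_bb (n : ℕ) (x : ℝ) : Summable fun k => ‖bb n k * x^k‖ := by
  refine (Real.summable_pow_div_factorial |(n:ℝ) * x|).congr fun k => ?_
  simp [bb, abs_pow, abs_div, mul_pow, div_mul_eq_mul_div, abs_mul]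

lemma hasSum_cc (n : ℕ) (x : ℝ) :
    HasSum (fun m => cc n m * x^m) ((Real.exp x * (1 - x)) ^ n) := by
  have H := hasSum_sum_range_mul_of_summable_norm (summable_aa n x) (summable_bb n x)
  have h1 : (∑' j, aa n j * x^j) = (1 - x)^n := by
    rw [tsum_eq_sum (s := Finset.range (n+1)) (by
      intro j hj
      rw [Finset.mem_range, not_lt] at hj
      simp [aa, Nat.choose_eq_zero_of_lt (Nat.lt_of_succ_le hj)])]
    rw [show (1 - x : ℝ) = -x + 1 by ring, add_pow]
    refine Finset.sum_congr rfl fun j hj => ?_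
    rw [aa, neg_pow x j]
    ring
  have h2 : (∑' k, bb n k * x^k) = Real.exp ((n:ℕ) * x) := by
    rw [Real.exp_eq_exp_ℝ, NormedSpace.exp_eq_tsum_div]
    refine tsum_congr fun k => ?_
    rw [bb, mul_pow, div_mul_eq_mul_div]
  rw [h1, h2] at H
  have h3 : (1 - x)^n * Real.exp ((n:ℕ) * x) = (Real.exp x * (1 - x)) ^ n := by
    rw [Real.exp_nat_mul, mul_pow]
    ring
  rw [h3] at H
  refine H.congr_fun fun m => ?_
  rw [cc, Finset.sum_mul]
  refine Finset.sum_congr rfl fun k hk => ?_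
  rw [Finset.mem_range] at hk
  have hx : x^k * x^(m-k) = x^m := by
    rw [← pow_add, Nat.add_sub_cancel' (by omega)]
  rw [← hx]; ring

noncomputable def ss (n m : ℕ) : ℝ := ∑ i ∈ Finset.range (m+1), (i:ℝ) * (aa n i * bb n (m-i))

lemma bb_succ (n k : ℕ) : ((k:ℝ)+1) * bb n (k+1) = (n:ℝ) * bb n k := by
  rw [bb, bb, Nat.factorial_succ, pow_succ]
  push_cast
  have h1 : (Nat.factorial k : ℝ) ≠ 0 := Nat.cast_ne_zero.mpr (Nat.factorial_ne_zero k)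
  have h2 : ((k:ℝ)+1) ≠ 0 := by positivity
  field_simp

lemma aa_succ (n j : ℕ) : ((j:ℝ)+1) * aa n (j+1) = -((n:ℝ) - (j:ℝ)) * aa n j := by
  rw [aa, aa]
  rcases le_or_gt (j+1) n with h | h
  · have hc := Nat.choose_succ_right_eq n j
    have hcast := congrArg (fun t : ℕ => (t : ℝ)) hc
    push_cast [Nat.cast_sub (show j ≤ n by omega)] at hcast
    rw [pow_succ]
    linear_combination ((-1:ℝ))^j * (-1) * hcast
  · rcases le_or_gt j n with h' | h'
    · have hj : j = n := by omega
      subst hj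
      rw [Nat.choose_succ_self]
      simp
    · rw [Nat.choose_eq_zero_of_lt h', Nat.choose_eq_zero_of_lt (by omega)]
      simp

lemma decomp (n m : ℕ) : ((m:ℝ)+1) * cc n (m+1) =
    (∑ j ∈ Finset.range (m+2), (j:ℝ) * (aa n j * bb n (m+1-j))) +
    (∑ j ∈ Finset.range (m+2), ((m+1-j : ℕ):ℝ) * (aa n j * bb n (m+1-j))) := by
  rw [cc, Finset.mul_sum, ← Finset.sum_add_distrib]
  refine Finset.sum_congr rfl fun j hj => ?_
  rw [Finset.mem_range] at hj
  rw [← add_mul, Nat.cast_sub (by omega : j ≤ m+1)]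
  push_cast
  ring

lemma T2 (n m : ℕ) :
    (∑ j ∈ Finset.range (m+2), ((m+1-j : ℕ):ℝ) * (aa n j * bb n (m+1-j))) = (n:ℝ) * cc n m := by
  rw [Finset.sum_range_succ]
  simp only [Nat.sub_self, Nat.cast_zero, zero_mul, add_zero]
  rw [cc, Finset.mul_sum]
  refine Finset.sum_congr rfl fun j hj => ?_
  rw [Finset.mem_range] at hj
  have h : m + 1 - j = (m - j) + 1 := by omega
  rw [h]
  push_cast
  linear_combination aa n j * bb_succ n (m-j)

lemma T1 (n m : ℕ) :
    (∑ j ∈ Finset.range (m+2), (j:ℝ) * (aa n j * bb n (m+1-j))) =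
      -((n:ℝ) * cc n m) + ss n m := by
  rw [Finset.sum_range_succ']
  simp only [Nat.cast_zero, zero_mul, add_zero]
  rw [cc, ss, Finset.mul_sum, ← Finset.sum_neg_distrib, ← Finset.sum_add_distrib]
  refine Finset.sum_congr rfl fun j hj => ?_
  have h : m + 1 - (j+1) = m - j := by omega
  rw [h]
  push_cast
  linear_combination bb n (m-j) * aa_succ n j

lemma L1 (n m : ℕ) : ((m:ℝ)+1) * cc n (m+1) = ss n m := by
  rw [decomp, T1, T2]; ring

lemma L2 (n m : ℕ) : ((m:ℝ)+1) * cc n (m+1) = ss n (m+1) + (n:ℝ) * cc n m := by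
  rw [decomp, T2, ss]

lemma REC (n m : ℕ) : ((m:ℝ)+2) * cc n (m+2) = ((m:ℝ)+1) * cc n (m+1) - (n:ℝ) * cc n m := by
  have h1 := L1 n (m+1)
  have h2 := L2 n m
  push_cast at h1
  have h3 : ((m:ℝ)+1+1) = (m:ℝ)+2 := by ring
  rw [h3] at h1
  linarith

lemma cc_zero (n : ℕ) : cc n 0 = 1 := by simp [cc, aa, bb]

lemma cc_one (n : ℕ) : cc n 1 = 0 := by
  rw [cc]
  rw [Finset.sum_range_succ, Finset.sum_range_one]
  simp [aa, bb]

lemma cc_bound (n : ℕ) (hn : 1 ≤ n) : ∀ m, |cc n m| ≤ (Real.sqrt n)^m := by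
  have hn' : (1:ℝ) ≤ (n:ℝ) := by exact_mod_cast hn
  have hs1 : 1 ≤ Real.sqrt n := by
    rw [show (1:ℝ) = Real.sqrt 1 by simp]
    exact Real.sqrt_le_sqrt hn'
  have hss : Real.sqrt n * Real.sqrt n = (n:ℝ) := Real.mul_self_sqrt (by positivity)
  intro m
  induction m using Nat.twoStepInduction with
  | zero => simp [cc_zero]
  | one =>
    rw [cc_one, abs_zero]
    positivity
  | more m ih1 ih2 =>
    have hrec := REC n m
    have hm2 : ((m:ℝ)+2) ≠ 0 := by positivity
    have hcc : cc n (m+2) = (((m:ℝ)+1) * cc n (m+1) - (n:ℝ) * cc n m) / ((m:ℝ)+2) := by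
      field_simp
      linarith
    have e1 : |((m:ℝ)+1) * cc n (m+1)| ≤ ((m:ℝ)+1) * Real.sqrt n ^ (m+2) := by
      rw [abs_mul, abs_of_nonneg (by positivity : (0:ℝ) ≤ (m:ℝ)+1)]
      refine mul_le_mul_of_nonneg_left (ih2.trans ?_) (by positivity)
      refine pow_le_pow_right₀ hs1 (by omega)
    have e2 : |(n:ℝ) * cc n m| ≤ Real.sqrt n ^ (m+2) := by
      rw [abs_mul, abs_of_nonneg (by positivity : (0:ℝ) ≤ (n:ℝ))]
      calc (n:ℝ) * |cc n m| ≤ (n:ℝ) * Real.sqrt n ^ m :=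
            mul_le_mul_of_nonneg_left ih1 (by positivity)
        _ = Real.sqrt n ^ (m+2) := by
            rw [pow_add, pow_two]
            linear_combination (-(Real.sqrt (n:ℝ))^m) * hss
    rw [hcc, abs_div, abs_of_nonneg (by positivity : (0:ℝ) ≤ (m:ℝ)+2),
      div_le_iff₀ (by positivity)]
    calc |((m:ℝ)+1) * cc n (m+1) - (n:ℝ) * cc n m|
        ≤ |((m:ℝ)+1) * cc n (m+1)| + |(n:ℝ) * cc n m| := abs_sub _ _
      _ ≤ ((m:ℝ)+1) * Real.sqrt n ^ (m+2) + Real.sqrt n ^ (m+2) := by linarith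
      _ = Real.sqrt n ^ (m+2) * ((m:ℝ)+2) := by ring

lemma summable_norm_cc (n : ℕ) (x : ℝ) : Summable fun m => ‖cc n m * x^m‖ := by
  have H := summable_norm_sum_mul_range_of_summable_norm (summable_aa n x) (summable_bb n x)
  refine H.congr fun m => ?_
  congr 1
  rw [cc, Finset.sum_mul]
  refine Finset.sum_congr rfl fun k hk => ?_
  rw [Finset.mem_range] at hk
  have hx : x^k * x^(m-k) = x^m := by
    rw [← pow_add, Nat.add_sub_cancel' (by omega)]
  rw [← hx]; ring

lemma hasFPow (n : ℕ) : HasFPowerSeriesOnBall (fun x : ℝ => (Real.exp x * (1 - x)) ^ n)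
    (FormalMultilinearSeries.ofScalars ℝ (cc n)) 0 1 := by
  constructor
  · apply FormalMultilinearSeries.le_radius_of_summable
    refine (summable_norm_cc n 1).congr fun m => ?_
    rw [FormalMultilinearSeries.ofScalars_norm]
    simp
  · exact one_pos
  · intro y hy
    simp only [zero_add]
    have h := hasSum_cc n y
    have he : (fun m => FormalMultilinearSeries.ofScalars ℝ (cc n) m fun _ => y)
        = fun m => cc n m * y^m := by
      funext m
      rw [FormalMultilinearSeries.ofScalars_apply_eq, smul_eq_mul]
    rw [he]
    exact h

lemma tau_eq (n m : ℕ) : tau m n = (Nat.factorial m : ℝ) * cc n m := by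
  rw [tau]
  have h := (hasFPow n).factorial_smul (1 : ℝ) m
  rw [iteratedDeriv_eq_iteratedFDeriv, ← h, FormalMultilinearSeries.ofScalars_apply_eq]
  simp [mul_comm]

/-- For `n ≥ 1`, `m₀ ≥ 1` and `0 ≤ x ≤ 1`,
`|(eˣ(1−x))ⁿ − Σ_{m<m₀} (τ_m(n)/m!)·xᵐ| ≤ m₀·2^{m₀}·(x√n)^{m₀}`. -/
theorem tau_truncation_bound (n : ℕ) (hn : 1 ≤ n) (m₀ : ℕ) (hm₀ : 1 ≤ m₀)
    (x : ℝ) (hx0 : 0 ≤ x) (hx1 : x ≤ 1) :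
    |(Real.exp x * (1 - x)) ^ n -
        ∑ m ∈ Finset.range m₀, tau m n / (Nat.factorial m : ℝ) * x ^ m| ≤
      (m₀ : ℝ) * 2 ^ m₀ * (x * Real.sqrt n) ^ m₀ := by
  set s := Real.sqrt n with hs
  set q := x * s with hqdef
  have hs0 : (0:ℝ) ≤ s := Real.sqrt_nonneg _
  have hq0 : (0:ℝ) ≤ q := mul_nonneg hx0 hs0
  have hτ : ∀ m, tau m n / (Nat.factorial m : ℝ) = cc n m := by
    intro m
    rw [tau_eq, mul_comm, mul_div_assoc, div_self
      (Nat.cast_ne_zero.mpr (Nat.factorial_ne_zero m)), mul_one]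
  rw [Finset.sum_congr rfl fun m _ => by rw [hτ m]]
  have hb : ∀ m, |cc n m * x^m| ≤ q^m := by
    intro m
    rw [abs_mul, abs_pow, abs_of_nonneg hx0, hqdef, mul_pow, mul_comm (x^m)]
    exact mul_le_mul_of_nonneg_right (cc_bound n hn m) (by positivity)
  have hm₀R : (1:ℝ) ≤ (m₀:ℝ) := by exact_mod_cast hm₀
  rcases le_or_gt q (1/2) with hq | hq
  · -- small q case
    have hq1 : q < 1 := by linarith
    have hsummable := (hasSum_cc n x).summable
    have key : (Real.exp x * (1 - x)) ^ n - ∑ m ∈ Finset.range m₀, cc n m * x^m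
        = ∑' i, cc n (i+m₀) * x^(i+m₀) := by
      have h := Summable.sum_add_tsum_nat_add m₀ hsummable
      rw [(hasSum_cc n x).tsum_eq] at h
      linarith
    rw [key]
    have hgs : Summable fun i : ℕ => q^(i+m₀) := by
      refine Summable.congr (((summable_geometric_of_lt_one hq0 hq1).mul_right (q^m₀))) ?_
      intro i
      rw [← pow_add]
    have habs : Summable fun i : ℕ => |cc n (i+m₀) * x^(i+m₀)| := by
      refine Summable.of_nonneg_of_le (fun i => abs_nonneg _) (fun i => hb _) hgs
    have hnorm : Summable fun i => ‖cc n (i+m₀) * x^(i+m₀)‖ := by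
      simpa only [Real.norm_eq_abs] using habs
    have h1 : |∑' i, cc n (i+m₀) * x^(i+m₀)| ≤ ∑' i, q^(i+m₀) := by
      calc |∑' i, cc n (i+m₀) * x^(i+m₀)| = ‖∑' i, cc n (i+m₀) * x^(i+m₀)‖ :=
            (Real.norm_eq_abs _).symm
        _ ≤ ∑' i, ‖cc n (i+m₀) * x^(i+m₀)‖ := norm_tsum_le_tsum_norm hnorm
        _ ≤ ∑' i, q^(i+m₀) :=
            Summable.tsum_le_tsum (fun i => by simpa only [Real.norm_eq_abs] using hb (i+m₀)) hnorm hgs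
    have h2 : (∑' i : ℕ, q^(i+m₀)) = (1-q)⁻¹ * q^m₀ := by
      rw [show (fun i : ℕ => q^(i+m₀)) = fun i : ℕ => q^i * q^m₀ by
        funext i; rw [← pow_add]]
      rw [tsum_mul_right, tsum_geometric_of_lt_one hq0 hq1]
    have h3 : (1-q)⁻¹ ≤ 2 := by
      rw [inv_le_iff_one_le_mul₀ (by linarith)]
      linarith
    have h4 : (2:ℝ) ≤ (m₀:ℝ) * 2^m₀ := by
      have : (2:ℝ) ≤ 2^m₀ := by
        calc (2:ℝ) = 2^1 := by norm_num
        _ ≤ 2^m₀ := pow_le_pow_right₀ (by norm_num) hm₀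
      nlinarith
    calc |∑' i, cc n (i+m₀) * x^(i+m₀)| ≤ (1-q)⁻¹ * q^m₀ := h2 ▸ h1
      _ ≤ 2 * q^m₀ := mul_le_mul_of_nonneg_right h3 (by positivity)
      _ ≤ (m₀:ℝ) * 2^m₀ * q^m₀ := mul_le_mul_of_nonneg_right h4 (by positivity)
  · -- large q case
    have h2q : (1:ℝ) ≤ 2 * q := by linarith
    have hf1 : Real.exp x * (1 - x) ≤ 1 := by
      have h1 : Real.exp x * (1 - x) ≤ Real.exp x * (Real.exp x)⁻¹ := by
        refine mul_le_mul_of_nonneg_left ?_ (Real.exp_pos x).le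
        rw [← Real.exp_neg]
        linarith [Real.add_one_le_exp (-x)]
      rwa [mul_inv_cancel₀ (Real.exp_ne_zero x)] at h1
    have hf0 : 0 ≤ Real.exp x * (1 - x) := mul_nonneg (Real.exp_pos x).le (by linarith)
    have hfn1 : (Real.exp x * (1 - x)) ^ n ≤ 1 := pow_le_one₀ hf0 hf1
    have hfn0 : 0 ≤ (Real.exp x * (1 - x)) ^ n := pow_nonneg hf0 n
    have hsplit : ∑ m ∈ Finset.range m₀, cc n m * x^m
        = 1 + ∑ m ∈ Finset.Ico 1 m₀, cc n m * x^m := by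
      rw [Finset.range_eq_Ico, Finset.sum_eq_sum_Ico_succ_bot (by omega : 0 < m₀)]
      rw [cc_zero, pow_zero, mul_one]
    rw [hsplit]
    have hterm : ∀ m ∈ Finset.Ico 1 m₀, |cc n m * x^m| ≤ (2*q)^m₀ := by
      intro m hm
      rw [Finset.mem_Ico] at hm
      refine (hb m).trans ?_
      calc q^m ≤ (2*q)^m := pow_le_pow_left₀ hq0 (by linarith) m
        _ ≤ (2*q)^m₀ := pow_le_pow_right₀ h2q (by omega)
    have hT : |∑ m ∈ Finset.Ico 1 m₀, cc n m * x^m| ≤ ((m₀:ℝ) - 1) * (2*q)^m₀ := by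
      refine (Finset.abs_sum_le_sum_abs _ _).trans ?_
      refine (Finset.sum_le_sum hterm).trans ?_
      rw [Finset.sum_const, Nat.card_Ico, nsmul_eq_mul]
      rw [Nat.cast_sub hm₀]
      simp
    have hone : (1:ℝ) ≤ (2*q)^m₀ := one_le_pow₀ h2q
    have hfinal : |(Real.exp x * (1 - x)) ^ n - (1 + ∑ m ∈ Finset.Ico 1 m₀, cc n m * x^m)|
        ≤ 1 + ((m₀:ℝ) - 1) * (2*q)^m₀ := by
      have habs1 : |(Real.exp x * (1 - x)) ^ n - 1| ≤ 1 := abs_le.mpr ⟨by linarith, by linarith⟩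
      calc |(Real.exp x * (1 - x)) ^ n - (1 + ∑ m ∈ Finset.Ico 1 m₀, cc n m * x^m)|
          = |((Real.exp x * (1 - x)) ^ n - 1) - ∑ m ∈ Finset.Ico 1 m₀, cc n m * x^m| := by
            rw [sub_add_eq_sub_sub]
        _ ≤ |(Real.exp x * (1 - x)) ^ n - 1| + |∑ m ∈ Finset.Ico 1 m₀, cc n m * x^m| :=
            abs_sub _ _
        _ ≤ 1 + ((m₀:ℝ) - 1) * (2*q)^m₀ := by linarith
    refine hfinal.trans ?_
    have : (m₀:ℝ) * 2^m₀ * q^m₀ = (m₀:ℝ) * (2*q)^m₀ := by rw [mul_pow]; ring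
    rw [this]
    nlinarith [hone]
end
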